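/- arXiv:1606.01168 — 6 statements merged into one kernel-verified Lean document; each statement's English description precedes it below -/
import Mathlib

section
/- Let 0 < ε < 1/10 and c ≤ ε³/10. Let G be a spanning subgraph of a graph Γ, let (U',V') be a pair of disjoint vertex sets in V(Γ), and let U ⊆ U' and V ⊆ V'. Assume (U',V') is (p, c·p·√(|U||V|))-bijumbled in Γ and (U,V) is (ε,d,p)-regular in G. If |U'| ≤ (1 + ε³/10)|U| and |V'| ≤ (1 + ε³/10)|V|, then (U',V') is (2ε,d,p)-regular in G. -/
open Finset
open scoped Classical

variable {α : Type*} [Fintype α] [DecidableEq α]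

/-- Number of edges of `G` between `A` and `B` (counted as ordered pairs from `A × B`). -/
def eB (G : SimpleGraph α) [DecidableRel G.Adj] (A B : Finset α) : ℕ :=
  ∑ a ∈ A, (B.filter (G.Adj a)).card

/-- The `p`-density of the pair `(A,B)` in `G`. -/
noncomputable def dens (G : SimpleGraph α) [DecidableRel G.Adj] (p : ℝ) (A B : Finset α) : ℝ :=
  (eB G A B : ℝ) / (p * (A.card : ℝ) * (B.card : ℝ))

/-- The pair `(A,B)` is `(p,γ)`-bijumbled in `G`. -/
def Bijumbled (G : SimpleGraph α) [DecidableRel G.Adj] (p γ : ℝ) (A B : Finset α) : Prop :=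
  ∀ A' ⊆ A, ∀ B' ⊆ B,
    |(eB G A' B' : ℝ) - p * (A'.card : ℝ) * (B'.card : ℝ)| ≤
      γ * Real.sqrt ((A'.card : ℝ) * (B'.card : ℝ))

/-- The pair `(A,B)` is `(ε,p)`-regular in `G`. -/
def RegularPair (G : SimpleGraph α) [DecidableRel G.Adj] (ε p : ℝ) (A B : Finset α) : Prop :=
  ∀ A' ⊆ A, ∀ B' ⊆ B, ε * (A.card : ℝ) ≤ (A'.card : ℝ) → ε * (B.card : ℝ) ≤ (B'.card : ℝ) →
    |dens G p A' B' - dens G p A B| ≤ ε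

/-- The pair `(A,B)` is `(ε,d,p)`-regular in `G`. -/
def RegularTriple (G : SimpleGraph α) [DecidableRel G.Adj] (ε d p : ℝ) (A B : Finset α) : Prop :=
  RegularPair G ε p A B ∧ d - ε ≤ dens G p A B

set_option maxHeartbeats 4000000

section Helpers

lemma eB_le_of_le {G Γ : SimpleGraph α} [DecidableRel G.Adj] [DecidableRel Γ.Adj]
    (h : G ≤ Γ) (A B : Finset α) : eB G A B ≤ eB Γ A B := by
  refine Finset.sum_le_sum fun a _ => Finset.card_le_card ?_
  intro x hx
  simp only [Finset.mem_filter] at hx ⊢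
  exact ⟨hx.1, h hx.2⟩

lemma eB_split_left (G : SimpleGraph α) [DecidableRel G.Adj] {A₀ A : Finset α}
    (h : A₀ ⊆ A) (B : Finset α) : eB G A B = eB G A₀ B + eB G (A \ A₀) B := by
  unfold eB
  rw [← Finset.sum_union Finset.disjoint_sdiff, Finset.union_sdiff_of_subset h]

lemma eB_split_right (G : SimpleGraph α) [DecidableRel G.Adj] (A : Finset α) {B₀ B : Finset α}
    (h : B₀ ⊆ B) : eB G A B = eB G A B₀ + eB G A (B \ B₀) := by
  unfold eB
  rw [← Finset.sum_add_distrib]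
  refine Finset.sum_congr rfl fun a _ => ?_
  rw [← Finset.card_union_of_disjoint (Finset.disjoint_filter_filter Finset.disjoint_sdiff),
    ← Finset.filter_union, Finset.union_sdiff_of_subset h]

lemma dens_empty_left (G : SimpleGraph α) [DecidableRel G.Adj] (p : ℝ) (B : Finset α) :
    dens G p ∅ B = 0 := by
  unfold _root_.dens eB
  simp

lemma dens_empty_right (G : SimpleGraph α) [DecidableRel G.Adj] (p : ℝ) (A : Finset α) :
    dens G p A ∅ = 0 := by
  unfold _root_.dens eB
  simp

lemma inter_card_lb {U U' U'' : Finset α} (hU : U ⊆ U') (hU'' : U'' ⊆ U')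
    {δ σ : ℝ} (hU'c : (U'.card : ℝ) ≤ (1 + δ) * (U.card : ℝ))
    (hs : σ * (U.card : ℝ) ≤ (U''.card : ℝ)) :
    (σ - δ) * (U.card : ℝ) ≤ ((U'' ∩ U).card : ℝ) := by
  have c1 : (U''.card : ℝ) = ((U'' ∩ U).card : ℝ) + ((U'' \ U).card : ℝ) := by
    rw [← Nat.cast_add, Finset.card_inter_add_card_sdiff]
  have c2 : ((U'' \ U).card : ℝ) ≤ ((U' \ U).card : ℝ) := by
    exact_mod_cast Nat.cast_le.mpr (Finset.card_le_card (Finset.sdiff_subset_sdiff hU'' le_rfl))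
  have c3 : ((U' \ U).card : ℝ) = (U'.card : ℝ) - (U.card : ℝ) := by
    rw [Finset.card_sdiff_of_subset hU, Nat.cast_sub (Finset.card_le_card hU)]
  linarith

lemma aux_main (G Γ : SimpleGraph α) [DecidableRel G.Adj] [DecidableRel Γ.Adj]
    (hGΓ : G ≤ Γ) (U' V' U V : Finset α)
    (hU : U ⊆ U') (hV : V ⊆ V')
    (ε c p : ℝ) (hε0 : 0 < ε) (hε : ε < 1 / 10) (hc : c ≤ ε ^ 3 / 10) (hp : 0 < p)
    (hj : Bijumbled Γ p (c * p * Real.sqrt ((U.card : ℝ) * (V.card : ℝ))) U' V')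
    (hU'c : (U'.card : ℝ) ≤ (1 + ε ^ 3 / 10) * (U.card : ℝ))
    (hV'c : (V'.card : ℝ) ≤ (1 + ε ^ 3 / 10) * (V.card : ℝ))
    (hu : 0 < (U.card : ℝ)) (hv : 0 < (V.card : ℝ))
    (U'' V'' : Finset α) (hU'' : U'' ⊆ U') (hV'' : V'' ⊆ V')
    (σ : ℝ) (hσε : ε + ε ^ 3 / 10 ≤ σ)
    (hs : σ * (U.card : ℝ) ≤ (U''.card : ℝ)) (ht : σ * (V.card : ℝ) ≤ (V''.card : ℝ)) :
    |dens G p U'' V'' - dens G p (U'' ∩ U) (V'' ∩ V)| ≤ 2 * ε ^ 3 / σ ^ 2 := by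
  have hσ0 : 0 < σ := lt_of_lt_of_le (by positivity) hσε
  have hε1 : ε ≤ 1 := by linarith
  have hε2 : ε ^ 2 ≤ 1 := by rw [sq]; exact mul_le_one₀ hε1 hε0.le hε1
  have hε3 : ε ^ 3 ≤ 1 := by
    calc ε ^ 3 = ε ^ 2 * ε := by ring
      _ ≤ 1 * 1 := mul_le_mul hε2 hε1 hε0.le zero_le_one
      _ = 1 := by norm_num
  have hε3ε : ε ^ 3 ≤ ε := by
    calc ε ^ 3 = ε ^ 2 * ε := by ring
      _ ≤ 1 * ε := mul_le_mul_of_nonneg_right hε2 hε0.le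
      _ = ε := one_mul ε
  have hmlb := inter_card_lb hU hU'' hU'c hs
  have hnlb := inter_card_lb hV hV'' hV'c ht
  set u : ℝ := (U.card : ℝ) with hudef
  set v : ℝ := (V.card : ℝ) with hvdef
  set s : ℝ := (U''.card : ℝ) with hsdef
  set t : ℝ := (V''.card : ℝ) with htdef
  set m : ℝ := ((U'' ∩ U).card : ℝ) with hmdef
  set n : ℝ := ((V'' ∩ V).card : ℝ) with hndef
  have hm0 : (0:ℝ) ≤ m := by rw [hmdef]; positivity
  have hn0 : (0:ℝ) ≤ n := by rw [hndef]; positivity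
  have hs0 : (0:ℝ) ≤ s := by rw [hsdef]; positivity
  have ht0 : (0:ℝ) ≤ t := by rw [htdef]; positivity
  have h_m_le_u : m ≤ u :=
    Nat.cast_le.mpr (Finset.card_le_card Finset.inter_subset_right)
  have h_n_le_v : n ≤ v :=
    Nat.cast_le.mpr (Finset.card_le_card Finset.inter_subset_right)
  have h_m_le_s : m ≤ s :=
    Nat.cast_le.mpr (Finset.card_le_card Finset.inter_subset_left)
  have h_n_le_t : n ≤ t :=
    Nat.cast_le.mpr (Finset.card_le_card Finset.inter_subset_left)
  have h_εm : ε * u ≤ m := by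
    have h1 : ε * u ≤ (σ - ε ^ 3 / 10) * u := by
      have := mul_le_mul_of_nonneg_right (show ε ≤ σ - ε ^ 3 / 10 by linarith) hu.le
      linarith
    linarith
  have h_εn : ε * v ≤ n := by
    have h1 : ε * v ≤ (σ - ε ^ 3 / 10) * v := by
      have := mul_le_mul_of_nonneg_right (show ε ≤ σ - ε ^ 3 / 10 by linarith) hv.le
      linarith
    linarith
  have hm_pos : 0 < m := lt_of_lt_of_le (by positivity) h_εm
  have hn_pos : 0 < n := lt_of_lt_of_le (by positivity) h_εn
  have hs_pos : 0 < s := lt_of_lt_of_le (by positivity) hs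
  have ht_pos : 0 < t := lt_of_lt_of_le (by positivity) ht
  -- sdiff bounds
  have hU'card : ((U' \ U).card : ℝ) = (U'.card : ℝ) - u := by
    rw [Finset.card_sdiff_of_subset hU, Nat.cast_sub (Finset.card_le_card hU)]
  have hV'card : ((V' \ V).card : ℝ) = (V'.card : ℝ) - v := by
    rw [Finset.card_sdiff_of_subset hV, Nat.cast_sub (Finset.card_le_card hV)]
  have h_sdU : ((U'' \ U).card : ℝ) ≤ ε ^ 3 / 10 * u := by
    have h1 : ((U'' \ U).card : ℝ) ≤ ((U' \ U).card : ℝ) :=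
      Nat.cast_le.mpr (Finset.card_le_card (Finset.sdiff_subset_sdiff hU'' le_rfl))
    rw [hU'card] at h1
    linarith
  have h_sdV : ((V'' \ V).card : ℝ) ≤ ε ^ 3 / 10 * v := by
    have h1 : ((V'' \ V).card : ℝ) ≤ ((V' \ V).card : ℝ) :=
      Nat.cast_le.mpr (Finset.card_le_card (Finset.sdiff_subset_sdiff hV'' le_rfl))
    rw [hV'card] at h1
    linarith
  have h_s_split : s = m + ((U'' \ U).card : ℝ) := by
    rw [hsdef, hmdef, ← Nat.cast_add, Finset.card_inter_add_card_sdiff]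
  have h_t_split : t = n + ((V'' \ V).card : ℝ) := by
    rw [htdef, hndef, ← Nat.cast_add, Finset.card_inter_add_card_sdiff]
  have h_s_le : s ≤ m + ε ^ 3 / 10 * u := by linarith
  have h_t_le : t ≤ n + ε ^ 3 / 10 * v := by linarith
  have h_s_2u : s ≤ 2 * u := by
    have h1 : s ≤ (U'.card : ℝ) := Nat.cast_le.mpr (Finset.card_le_card hU'')
    have h2 : (1 + ε ^ 3 / 10) * u ≤ 2 * u := by
      have := mul_le_mul_of_nonneg_right (show (1:ℝ) + ε ^ 3 / 10 ≤ 2 by linarith) hu.le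
      linarith
    linarith
  have h_t_2v : t ≤ 2 * v := by
    have h1 : t ≤ (V'.card : ℝ) := Nat.cast_le.mpr (Finset.card_le_card hV'')
    have h2 : (1 + ε ^ 3 / 10) * v ≤ 2 * v := by
      have := mul_le_mul_of_nonneg_right (show (1:ℝ) + ε ^ 3 / 10 ≤ 2 by linarith) hv.le
      linarith
    linarith
  -- key per-pair bound
  have key : ∀ X ⊆ U', ∀ Y ⊆ V',
      (eB G X Y : ℝ) ≤ p * (X.card : ℝ) * (Y.card : ℝ) + ε ^ 3 / 5 * (p * (u * v)) := by
    intro X hX Y hY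
    have h1 : (eB G X Y : ℝ) ≤ (eB Γ X Y : ℝ) := Nat.cast_le.mpr (eB_le_of_le hGΓ X Y)
    have h2 := (abs_le.mp (hj X hX Y hY)).2
    have hXc : (X.card : ℝ) ≤ 2 * u := by
      have hx1 : ((X.card : ℕ) : ℝ) ≤ (U'.card : ℝ) := Nat.cast_le.mpr (Finset.card_le_card hX)
      have h2' : (1 + ε ^ 3 / 10) * u ≤ 2 * u := by
        have := mul_le_mul_of_nonneg_right (show (1:ℝ) + ε ^ 3 / 10 ≤ 2 by linarith) hu.le
        linarith
      linarith
    have hYc : (Y.card : ℝ) ≤ 2 * v := by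
      have hy1 : ((Y.card : ℕ) : ℝ) ≤ (V'.card : ℝ) := Nat.cast_le.mpr (Finset.card_le_card hY)
      have h2' : (1 + ε ^ 3 / 10) * v ≤ 2 * v := by
        have := mul_le_mul_of_nonneg_right (show (1:ℝ) + ε ^ 3 / 10 ≤ 2 by linarith) hv.le
        linarith
      linarith
    have hXnn : (0:ℝ) ≤ (X.card : ℝ) := Nat.cast_nonneg _
    have hYnn : (0:ℝ) ≤ (Y.card : ℝ) := Nat.cast_nonneg _
    have hXY : (X.card : ℝ) * (Y.card : ℝ) ≤ 4 * (u * v) := by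
      linarith [mul_le_mul hXc hYc hYnn (by positivity : (0:ℝ) ≤ 2 * u)]
    have hsq : Real.sqrt ((X.card : ℝ) * (Y.card : ℝ)) ≤ 2 * Real.sqrt (u * v) := by
      calc Real.sqrt ((X.card : ℝ) * (Y.card : ℝ)) ≤ Real.sqrt (4 * (u * v)) :=
            Real.sqrt_le_sqrt hXY
        _ = 2 * Real.sqrt (u * v) := by
            rw [show (4 : ℝ) * (u * v) = 2 ^ 2 * (u * v) by ring,
              Real.sqrt_mul (by positivity), Real.sqrt_sq (by norm_num)]
    have hsqnn : (0:ℝ) ≤ Real.sqrt ((X.card : ℝ) * (Y.card : ℝ)) := Real.sqrt_nonneg _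
    have h3 : c * p * Real.sqrt (u * v) * Real.sqrt ((X.card : ℝ) * (Y.card : ℝ)) ≤
        ε ^ 3 / 10 * (p * Real.sqrt (u * v) * Real.sqrt ((X.card : ℝ) * (Y.card : ℝ))) := by
      have := mul_le_mul_of_nonneg_right hc
        (show (0:ℝ) ≤ p * Real.sqrt (u * v) * Real.sqrt ((X.card : ℝ) * (Y.card : ℝ)) by
          positivity)
      linarith [this]
    have h4 : p * Real.sqrt (u * v) * Real.sqrt ((X.card : ℝ) * (Y.card : ℝ)) ≤
        p * Real.sqrt (u * v) * (2 * Real.sqrt (u * v)) :=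
      mul_le_mul_of_nonneg_left hsq (by positivity)
    have h5 : p * Real.sqrt (u * v) * (2 * Real.sqrt (u * v)) = 2 * (p * (u * v)) := by
      have hss : Real.sqrt (u * v) * Real.sqrt (u * v) = u * v :=
        Real.mul_self_sqrt (by positivity)
      linear_combination 2 * p * hss
    have h6 : ε ^ 3 / 10 * (p * Real.sqrt (u * v) * Real.sqrt ((X.card : ℝ) * (Y.card : ℝ))) ≤
        ε ^ 3 / 10 * (2 * (p * (u * v))) := by
      have := mul_le_mul_of_nonneg_left (h4.trans_eq h5) (show (0:ℝ) ≤ ε ^ 3 / 10 by positivity)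
      linarith
    linarith [h1, h2, h3, h6]
  -- bounds on the pieces
  have hkey1 := key (U'' ∩ U) ((Finset.inter_subset_left).trans hU'') (V'' \ V)
      ((Finset.sdiff_subset).trans hV'')
  have hkey2 := key (U'' \ U) ((Finset.sdiff_subset).trans hU'') V'' hV''
  have hkey0 := key (U'' ∩ U) ((Finset.inter_subset_left).trans hU'') (V'' ∩ V)
      ((Finset.inter_subset_left).trans hV'')
  set e0 : ℝ := (eB G (U'' ∩ U) (V'' ∩ V) : ℝ) with he0def
  set x1 : ℝ := (eB G (U'' ∩ U) (V'' \ V) : ℝ) with hx1def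
  set x2 : ℝ := (eB G (U'' \ U) V'' : ℝ) with hx2def
  have he0nn : (0:ℝ) ≤ e0 := by rw [he0def]; positivity
  have hx1nn : (0:ℝ) ≤ x1 := by rw [hx1def]; positivity
  have hx2nn : (0:ℝ) ≤ x2 := by rw [hx2def]; positivity
  have hsdUnn : (0:ℝ) ≤ ((U'' \ U).card : ℝ) := Nat.cast_nonneg _
  have hsdVnn : (0:ℝ) ≤ ((V'' \ V).card : ℝ) := Nat.cast_nonneg _
  have hx1b : x1 ≤ 3 / 10 * (ε ^ 3 * (p * (u * v))) := by
    have hb : p * m * ((V'' \ V).card : ℝ) ≤ p * u * (ε ^ 3 / 10 * v) := by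
      have := mul_le_mul_of_nonneg_left (mul_le_mul h_m_le_u h_sdV hsdVnn hu.le) hp.le
      linarith [this]
    linarith [hkey1, hb]
  have hx2b : x2 ≤ 2 / 5 * (ε ^ 3 * (p * (u * v))) := by
    have hb : p * ((U'' \ U).card : ℝ) * t ≤ p * (ε ^ 3 / 10 * u) * (2 * v) := by
      have := mul_le_mul_of_nonneg_left (mul_le_mul h_sdU h_t_2v ht0 (by positivity)) hp.le
      linarith [this]
    linarith [hkey2, hb]
  have hx12 : x1 + x2 ≤ ε ^ 3 * (p * (u * v)) := by
    have hnn : (0:ℝ) ≤ ε ^ 3 * (p * (u * v)) := by positivity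
    linarith [hx1b, hx2b]
  have he0b : e0 ≤ 11 / 10 * (p * (m * n)) := by
    have hmn : ε ^ 2 * (u * v) ≤ m * n := by
      linarith [mul_le_mul h_εm h_εn (by positivity : (0:ℝ) ≤ ε * v) hm0]
    have i1 : p * (ε ^ 2 * (u * v)) ≤ p * (m * n) := mul_le_mul_of_nonneg_left hmn hp.le
    have i2 : ε * (ε ^ 2 * (p * (u * v))) ≤ 1 / 10 * (ε ^ 2 * (p * (u * v))) :=
      mul_le_mul_of_nonneg_right hε.le (by positivity)
    linarith [hkey0, i1, i2]
  -- numerator splitting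
  have h_eq : (eB G U'' V'' : ℝ) = e0 + x1 + x2 := by
    have h1 : eB G U'' V'' = eB G (U'' ∩ U) V'' + eB G (U'' \ U) V'' := by
      have h := eB_split_left G (Finset.inter_subset_left : U'' ∩ U ⊆ U'') V''
      rwa [Finset.sdiff_inter_self_left] at h
    have h2 : eB G (U'' ∩ U) V'' = eB G (U'' ∩ U) (V'' ∩ V) + eB G (U'' ∩ U) (V'' \ V) := by
      have h := eB_split_right G (U'' ∩ U) (Finset.inter_subset_left : V'' ∩ V ⊆ V'')
      rwa [Finset.sdiff_inter_self_left] at h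
    rw [he0def, hx1def, hx2def]
    push_cast [h1, h2]
    ring
  have hdens1 : dens G p U'' V'' = (e0 + x1 + x2) / (p * s * t) := by
    unfold _root_.dens
    rw [h_eq, hsdef, htdef]
  have hdens0 : dens G p (U'' ∩ U) (V'' ∩ V) = e0 / (p * m * n) := by
    unfold _root_.dens
    rw [he0def, hmdef, hndef]
  rw [hdens1, hdens0]
  have hpmn : (0:ℝ) < p * m * n := by positivity
  have hpst : (0:ℝ) < p * s * t := by positivity
  have h_mn_st : p * m * n ≤ p * s * t := by
    linarith [mul_le_mul_of_nonneg_left (mul_le_mul h_m_le_s h_n_le_t hn0 hs0) hp.le]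
  have hεσnn : (0:ℝ) ≤ ε ^ 3 / σ ^ 2 := by positivity
  rw [abs_le]
  constructor
  · -- need : -(2ε³/σ²) ≤ dens'' - dens₀
    have hstep1 : e0 / (p * s * t) ≤ (e0 + x1 + x2) / (p * s * t) :=
      (div_le_div_iff_of_pos_right hpst).mpr (by linarith)
    have hsub : e0 / (p * m * n) - e0 / (p * s * t)
        = (e0 * (p * s * t) - (p * m * n) * e0) / ((p * m * n) * (p * s * t)) :=
      div_sub_div e0 e0 hpmn.ne' hpst.ne'
    have h_stmn : s * t - m * n ≤ ε ^ 3 / 2 * (u * v) := by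
      have h1 : s * t ≤ (m + ε ^ 3 / 10 * u) * (n + ε ^ 3 / 10 * v) :=
        mul_le_mul h_s_le h_t_le ht0 (add_nonneg hm0 (by positivity))
      have f1 := mul_le_mul_of_nonneg_right h_m_le_u (show (0:ℝ) ≤ ε ^ 3 / 10 * v by positivity)
      have f2 := mul_le_mul_of_nonneg_left h_n_le_v (show (0:ℝ) ≤ ε ^ 3 / 10 * u by positivity)
      have f3 := mul_le_mul_of_nonneg_right hε3 (show (0:ℝ) ≤ ε ^ 3 * (u * v) by positivity)
      have f4 : (0:ℝ) ≤ ε ^ 3 * (u * v) := by positivity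
      linarith [h1, f1, f2, f3, f4]
    have k0 : (0:ℝ) ≤ s * t - m * n := by
      linarith [mul_le_mul h_m_le_s h_n_le_t hn0 hs0]
    have k2 : e0 * (p * (s * t - m * n)) ≤ (11 / 10 * (p * (m * n))) * (p * (s * t - m * n)) :=
      mul_le_mul_of_nonneg_right he0b (mul_nonneg hp.le k0)
    have k3 : (11 / 10 * (p * (m * n))) * (p * (s * t - m * n)) ≤
        (11 / 10 * (p * (m * n))) * (p * (ε ^ 3 / 2 * (u * v))) :=
      mul_le_mul_of_nonneg_left (mul_le_mul_of_nonneg_left h_stmn hp.le) (by positivity)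
    have hnum : e0 * (p * s * t) - (p * m * n) * e0 ≤
        (11 / 10 * (p * (m * n))) * (p * (ε ^ 3 / 2 * (u * v))) := by
      have : e0 * (p * s * t) - (p * m * n) * e0 = e0 * (p * (s * t - m * n)) := by ring
      linarith [k2, k3, this.le, this.ge]
    have hden : (p * (m * n)) * (p * ((σ * u) * (σ * v))) ≤ (p * m * n) * (p * s * t) := by
      have h1 : (σ * u) * (σ * v) ≤ s * t := mul_le_mul hs ht (by positivity) hs0
      linarith [mul_le_mul_of_nonneg_left h1
        (mul_nonneg (mul_nonneg hp.le (mul_nonneg hm0 hn0)) hp.le)]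
    have hdpos : (0:ℝ) < (p * (m * n)) * (p * ((σ * u) * (σ * v))) := by positivity
    have hfinal : (e0 * (p * s * t) - (p * m * n) * e0) / ((p * m * n) * (p * s * t)) ≤
        ((11 / 10 * (p * (m * n))) * (p * (ε ^ 3 / 2 * (u * v)))) /
          ((p * (m * n)) * (p * ((σ * u) * (σ * v)))) :=
      div_le_div₀ (by positivity) hnum hdpos hden
    have hval : ((11 / 10 * (p * (m * n))) * (p * (ε ^ 3 / 2 * (u * v)))) /
          ((p * (m * n)) * (p * ((σ * u) * (σ * v)))) = 11 / 20 * (ε ^ 3 / σ ^ 2) := by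
      field_simp
      ring
    rw [hval] at hfinal
    rw [← hsub] at hfinal
    have hh : e0 / (p * m * n) - (e0 + x1 + x2) / (p * s * t) ≤ 11 / 20 * (ε ^ 3 / σ ^ 2) := by
      linarith [hstep1, hfinal]
    rw [show (2:ℝ) * ε ^ 3 / σ ^ 2 = 2 * (ε ^ 3 / σ ^ 2) from by ring]
    linarith [hh, hεσnn]
  · -- need : dens'' - dens₀ ≤ 2ε³/σ²
    have hA1 : e0 / (p * s * t) ≤ e0 / (p * m * n) :=
      div_le_div_of_nonneg_left he0nn hpmn h_mn_st
    have hden2 : p * ((σ * u) * (σ * v)) ≤ p * s * t := by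
      have h1 : (σ * u) * (σ * v) ≤ s * t := mul_le_mul hs ht (by positivity) hs0
      linarith [mul_le_mul_of_nonneg_left h1 hp.le]
    have hA2 : (x1 + x2) / (p * s * t) ≤
        (ε ^ 3 * (p * (u * v))) / (p * ((σ * u) * (σ * v))) :=
      div_le_div₀ (by positivity) hx12 (by positivity) hden2
    have hA3 : (ε ^ 3 * (p * (u * v))) / (p * ((σ * u) * (σ * v))) = ε ^ 3 / σ ^ 2 := by
      field_simp
    have hsplit : (e0 + x1 + x2) / (p * s * t)
        = e0 / (p * s * t) + (x1 + x2) / (p * s * t) := by ring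
    rw [hA3] at hA2
    rw [show (2:ℝ) * ε ^ 3 / σ ^ 2 = 2 * (ε ^ 3 / σ ^ 2) from by ring]
    rw [hsplit]
    linarith [hA1, hA2, hεσnn]
end Helpers

/-- adding few vertices to a regular pair (sticking lemma). -/
theorem stmt_3 (G Γ : SimpleGraph α) [DecidableRel G.Adj] [DecidableRel Γ.Adj]
    (hGΓ : G ≤ Γ) (U' V' U V : Finset α) (hU'V' : Disjoint U' V')
    (hU : U ⊆ U') (hV : V ⊆ V')
    (ε c d p : ℝ) (hε0 : 0 < ε) (hε : ε < 1 / 10) (hc : c ≤ ε ^ 3 / 10) (hp : 0 < p)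
    (hj : Bijumbled Γ p (c * p * Real.sqrt ((U.card : ℝ) * (V.card : ℝ))) U' V')
    (hreg : RegularTriple G ε d p U V)
    (hU'c : (U'.card : ℝ) ≤ (1 + ε ^ 3 / 10) * (U.card : ℝ))
    (hV'c : (V'.card : ℝ) ≤ (1 + ε ^ 3 / 10) * (V.card : ℝ)) :
    RegularTriple G (2 * ε) d p U' V' := by
  have hε1 : ε ≤ 1 := by linarith
  have hε2s : ε ^ 2 ≤ 1 / 100 := by nlinarith
  have hε3ε : ε ^ 3 ≤ ε / 100 := by
    have h := mul_le_mul_of_nonneg_left hε2s hε0.le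
    calc ε ^ 3 = ε * ε ^ 2 := by ring
      _ ≤ ε * (1 / 100) := h
      _ = ε / 100 := by ring
  by_cases hUe : U.card = 0
  · have hU'e : U' = ∅ := by
      apply Finset.card_eq_zero.mp
      have h1 : (U'.card : ℝ) ≤ 0 := by
        rw [hUe] at hU'c
        push_cast at hU'c
        linarith
      exact_mod_cast le_antisymm (by exact_mod_cast h1) (Nat.zero_le _)
    have hU0 : U = ∅ := Finset.card_eq_zero.mp hUe
    subst hU'e
    constructor
    · intro A' hA' B' hB' _ _
      have hA'e : A' = ∅ := Finset.subset_empty.mp hA'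
      subst hA'e
      rw [dens_empty_left, dens_empty_left]
      simp only [sub_zero, abs_zero]
      linarith
    · have h2 := hreg.2
      rw [hU0, dens_empty_left] at h2
      rw [dens_empty_left]
      linarith
  · by_cases hVe : V.card = 0
    · have hV'e : V' = ∅ := by
        apply Finset.card_eq_zero.mp
        have h1 : (V'.card : ℝ) ≤ 0 := by
          rw [hVe] at hV'c
          push_cast at hV'c
          linarith
        exact_mod_cast le_antisymm (by exact_mod_cast h1) (Nat.zero_le _)
      have hV0 : V = ∅ := Finset.card_eq_zero.mp hVe
      subst hV'e
      constructor
      · intro A' hA' B' hB' _ _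
        have hB'e : B' = ∅ := Finset.subset_empty.mp hB'
        subst hB'e
        rw [dens_empty_right, dens_empty_right]
        simp only [sub_zero, abs_zero]
        linarith
      · have h2 := hreg.2
        rw [hV0, dens_empty_right] at h2
        rw [dens_empty_right]
        linarith
    · -- main case
      have hu : 0 < (U.card : ℝ) := by
        have := Nat.pos_of_ne_zero hUe
        exact_mod_cast this
      have hv : 0 < (V.card : ℝ) := by
        have := Nat.pos_of_ne_zero hVe
        exact_mod_cast this
      have hu' : (U.card : ℝ) ≤ (U'.card : ℝ) := Nat.cast_le.mpr (Finset.card_le_card hU)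
      have hv' : (V.card : ℝ) ≤ (V'.card : ℝ) := Nat.cast_le.mpr (Finset.card_le_card hV)
      -- key2 : comparison of (U',V') with (U,V)
      have key2 := aux_main G Γ hGΓ U' V' U V hU hV ε c p hε0 hε hc hp hj hU'c hV'c hu hv
        U' V' subset_rfl subset_rfl 1 (by linarith) (by linarith) (by linarith)
      rw [Finset.inter_eq_right.mpr hU, Finset.inter_eq_right.mpr hV] at key2
      have key2' : |dens G p U' V' - dens G p U V| ≤ 2 * ε ^ 3 := by
        have : (2 * ε ^ 3 / 1 ^ 2 : ℝ) = 2 * ε ^ 3 := by norm_num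
        rwa [this] at key2
      constructor
      · intro U'' hU'' V'' hV'' hsU hsV
        have hs2 : (2 * ε) * (U.card : ℝ) ≤ (U''.card : ℝ) := by
          have := mul_le_mul_of_nonneg_left hu' (show (0:ℝ) ≤ 2 * ε by positivity)
          linarith
        have ht2 : (2 * ε) * (V.card : ℝ) ≤ (V''.card : ℝ) := by
          have := mul_le_mul_of_nonneg_left hv' (show (0:ℝ) ≤ 2 * ε by positivity)
          linarith
        have key1 := aux_main G Γ hGΓ U' V' U V hU hV ε c p hε0 hε hc hp hj hU'c hV'c hu hv
          U'' V'' hU'' hV'' (2 * ε) (by linarith) hs2 ht2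
        have key1' : |dens G p U'' V'' - dens G p (U'' ∩ U) (V'' ∩ V)| ≤ ε / 2 := by
          have heq : (2 * ε ^ 3 / (2 * ε) ^ 2 : ℝ) = ε / 2 := by
            field_simp
          rwa [heq] at key1
        -- regularity on the intersections
        have hm : ε * (U.card : ℝ) ≤ ((U'' ∩ U).card : ℝ) := by
          have h1 := inter_card_lb hU hU'' hU'c hs2
          have h2 := mul_le_mul_of_nonneg_right
            (show ε ≤ 2 * ε - ε ^ 3 / 10 by linarith) hu.le
          linarith
        have hn : ε * (V.card : ℝ) ≤ ((V'' ∩ V).card : ℝ) := by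
          have h1 := inter_card_lb hV hV'' hV'c ht2
          have h2 := mul_le_mul_of_nonneg_right
            (show ε ≤ 2 * ε - ε ^ 3 / 10 by linarith) hv.le
          linarith
        have hregapp := hreg.1 (U'' ∩ U) Finset.inter_subset_right
          (V'' ∩ V) Finset.inter_subset_right hm hn
        have t1 := abs_sub_le (dens G p U'' V'') (dens G p (U'' ∩ U) (V'' ∩ V))
          (dens G p U' V')
        have t2 := abs_sub_le (dens G p (U'' ∩ U) (V'' ∩ V)) (dens G p U V)
          (dens G p U' V')
        have t3 : |dens G p U V - dens G p U' V'| ≤ 2 * ε ^ 3 := by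
          rw [abs_sub_comm]
          exact key2'
        have : ε / 2 + ε + 2 * ε ^ 3 ≤ 2 * ε := by linarith [hε3ε]
        linarith
      · have h2 := hreg.2
        have h3 := (abs_le.mp key2').1
        linarith [hε3ε]
end

section
/- Let 0 < ε ≤ 10^{-3}, and let G be a bipartite graph with vertex classes U and V of sizes m ≥ n ≥ 2ε^{-9}. Suppose G has density q = e(G)/(mn) ≥ ε^{-10}·n^{-1/2}. Then the number of (unlabelled) copies of C₄ in G is at least (1 - ε⁸)·q⁴·m²n²/4. -/
open Finset
open scoped Classical

variable {α : Type*} [Fintype α] [DecidableEq α]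

set_option maxHeartbeats 1000000 in
/-- counting `C₄` in dense bipartite pairs (lower bound). -/
theorem stmt_5 (G : SimpleGraph α) [DecidableRel G.Adj] (U V : Finset α) (hUV : Disjoint U V)
    (hbip : ∀ x y, G.Adj x y → (x ∈ U ∧ y ∈ V) ∨ (x ∈ V ∧ y ∈ U))
    (ε q : ℝ) (hε0 : 0 < ε) (hε : ε ≤ 1 / 1000)
    (hmn : (V.card : ℝ) ≤ (U.card : ℝ))
    (hn : 2 * ε ^ (-(9 : ℝ)) ≤ (V.card : ℝ))
    (hq : q = (eB G U V : ℝ) / ((U.card : ℝ) * (V.card : ℝ)))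
    (hqlb : ε ^ (-(10 : ℝ)) * (V.card : ℝ) ^ (-(1 / 2 : ℝ)) ≤ q) :
    (1 - ε ^ 8) * q ^ 4 * (U.card : ℝ) ^ 2 * (V.card : ℝ) ^ 2 / 4 ≤
      (1 / 2) * ∑ uu ∈ U.offDiag,
        (((V.filter (fun w => G.Adj uu.1 w ∧ G.Adj uu.2 w)).card.choose 2 : ℕ) : ℝ) := by
  -- basic positivity
  set m : ℝ := (U.card : ℝ) with hm
  set n : ℝ := (V.card : ℝ) with hnn
  have hε1 : ε < 1 := lt_of_le_of_lt hε (by norm_num)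
  have hεp : ∀ k : ℕ, 0 < ε ^ k := fun k => pow_pos hε0 k
  have hn2 : (2 : ℝ) ≤ n * ε ^ 9 := by
    have h9 : ε ^ (-(9 : ℝ)) = (ε ^ (9 : ℕ))⁻¹ := by
      rw [← Real.rpow_natCast ε 9, ← Real.rpow_neg hε0.le]; norm_num
    rw [h9] at hn
    have h := mul_le_mul_of_nonneg_right hn (hεp 9).le
    rw [mul_assoc, inv_mul_cancel₀ (hεp 9).ne', mul_one] at h
    exact h
  have hn0 : (0 : ℝ) < n := by nlinarith [hεp 9]
  have hm0 : (0 : ℝ) < m := lt_of_lt_of_le hn0 hmn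
  -- q bounds
  have hq0 : 0 < q := by
    refine lt_of_lt_of_le ?_ hqlb
    positivity
  have hq1 : q ≤ 1 := by
    have : (eB G U V : ℝ) ≤ m * n := by
      rw [eB]
      push_cast
      calc (∑ a ∈ U, ((V.filter (G.Adj a)).card : ℝ))
          ≤ ∑ a ∈ U, (V.card : ℝ) :=
            Finset.sum_le_sum fun a _ => by exact_mod_cast Finset.card_filter_le _ _
        _ = m * n := by rw [Finset.sum_const, nsmul_eq_mul]
    rw [hq, div_le_one (by positivity)]
    linarith
  -- q^2 * n lower bound
  have hB : (1 : ℝ) ≤ q ^ 2 * n * ε ^ 20 := by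
    have h10 : ε ^ (-(10 : ℝ)) = (ε ^ (10 : ℕ))⁻¹ := by
      rw [← Real.rpow_natCast ε 10, ← Real.rpow_neg hε0.le]; norm_num
    have hhalf : n ^ (-(1 / 2 : ℝ)) = (Real.sqrt n)⁻¹ := by
      rw [Real.sqrt_eq_rpow, ← Real.rpow_neg hn0.le]
    rw [h10, hhalf] at hqlb
    have hs0 : 0 < Real.sqrt n := Real.sqrt_pos.2 hn0
    have h1 : 1 ≤ q * Real.sqrt n * ε ^ 10 := by
      have h := mul_le_mul_of_nonneg_right hqlb (show (0:ℝ) ≤ Real.sqrt n * ε ^ 10 by positivity)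
      have hid : (ε ^ 10)⁻¹ * (Real.sqrt n)⁻¹ * (Real.sqrt n * ε ^ 10) = 1 := by
        field_simp
      rw [hid] at h
      calc (1:ℝ) ≤ q * (Real.sqrt n * ε ^ 10) := h
        _ = q * Real.sqrt n * ε ^ 10 := by ring
    have hsq : (q * Real.sqrt n * ε ^ 10) ^ 2 = q ^ 2 * n * ε ^ 20 := by
      rw [mul_pow, mul_pow, Real.sq_sqrt hn0.le, ← pow_mul]
    nlinarith [h1, hsq]
  have hε20 : ε ^ 20 ≤ 1 / 1000 := by
    calc ε ^ 20 ≤ ε ^ 1 := pow_le_pow_of_le_one hε0.le hε1.le (by norm_num)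
      _ = ε := pow_one ε
      _ ≤ 1 / 1000 := hε
  have hq2n : (1000 : ℝ) ≤ q ^ 2 * n := by
    have hB0 : (0:ℝ) ≤ q ^ 2 * n := by positivity
    have h := mul_le_mul_of_nonneg_left hε20 hB0
    nlinarith [h, hB]
  have hqn : (1000 : ℝ) ≤ q * n := by nlinarith [hq2n, hq1, hq0, hn0]
  have hqm : (1000 : ℝ) ≤ q * m := by nlinarith [hqn, hq0, hmn]
  have hqnm : q * n ≤ m := by
    calc q * n ≤ 1 * n := mul_le_mul_of_nonneg_right hq1 hn0.le
      _ = n := one_mul n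
      _ ≤ m := hmn
  have hA : (3 : ℝ) ≤ ε ^ 8 * q ^ 2 * n := by
    have hε12 : ε ^ 12 ≤ 1 / 3 := by
      calc ε ^ 12 ≤ ε ^ 1 := pow_le_pow_of_le_one hε0.le hε1.le (by norm_num)
        _ = ε := pow_one ε
        _ ≤ 1 / 3 := by linarith
    have hApos : (0 : ℝ) ≤ ε ^ 8 * q ^ 2 * n := by positivity
    have : q ^ 2 * n * ε ^ 20 = (ε ^ 8 * q ^ 2 * n) * ε ^ 12 := by ring
    rw [this] at hB
    nlinarith [mul_le_mul_of_nonneg_left hε12 hApos]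
  -- count edges from V side
  have he1 : eB G U V = ∑ w ∈ V, (U.filter (fun u => G.Adj u w)).card := by
    simp only [eB, card_filter]
    exact Finset.sum_comm
  -- codegree identity
  have he2 : ∑ p ∈ U ×ˢ U, (V.filter (fun w => G.Adj p.1 w ∧ G.Adj p.2 w)).card
      = ∑ w ∈ V, (U.filter (fun u => G.Adj u w)).card * (U.filter (fun u => G.Adj u w)).card := by
    simp only [card_filter]
    rw [Finset.sum_comm]
    refine Finset.sum_congr rfl fun w _ => ?_
    rw [Finset.sum_mul_sum, Finset.sum_product]
    refine Finset.sum_congr rfl fun u _ => Finset.sum_congr rfl fun u' _ => ?_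
    by_cases h1 : G.Adj u w <;> by_cases h2 : G.Adj u' w <;> simp [h1, h2]
  have he3 : ∑ p ∈ U.diag, (V.filter (fun w => G.Adj p.1 w ∧ G.Adj p.2 w)).card = eB G U V := by
    have himg : U.diag = U.image fun a => (a, a) := by
      ext ⟨i, j⟩
      simp only [Finset.mem_diag, Finset.mem_image, Prod.mk.injEq]
      constructor
      · rintro ⟨hi, rfl⟩; exact ⟨i, hi, rfl, rfl⟩
      · rintro ⟨a, ha, rfl, rfl⟩; exact ⟨ha, rfl⟩
    rw [himg, Finset.sum_image (by simp)]
    simp [eB, and_self]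
  have hsplit : ∑ p ∈ U ×ˢ U, (V.filter (fun w => G.Adj p.1 w ∧ G.Adj p.2 w)).card
      = ∑ p ∈ U.diag, (V.filter (fun w => G.Adj p.1 w ∧ G.Adj p.2 w)).card
        + ∑ p ∈ U.offDiag, (V.filter (fun w => G.Adj p.1 w ∧ G.Adj p.2 w)).card := by
    rw [← Finset.diag_union_offDiag, Finset.sum_union (Finset.disjoint_diag_offDiag _)]
  -- real versions
  set e : ℝ := (eB G U V : ℝ) with he
  set D : ℝ := ∑ p ∈ U.offDiag, ((V.filter (fun w => G.Adj p.1 w ∧ G.Adj p.2 w)).card : ℝ)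
    with hD
  set T : ℝ := ∑ p ∈ U.offDiag, ((V.filter (fun w => G.Adj p.1 w ∧ G.Adj p.2 w)).card : ℝ) ^ 2
    with hT
  set S2 : ℝ := ∑ w ∈ V, ((U.filter (fun u => G.Adj u w)).card : ℝ) ^ 2 with hS2
  have heq : q * m * n = e := by
    rw [hq]; field_simp
  have hkey : e + D = S2 := by
    have := hsplit
    rw [he2, he3] at this
    have hc := congrArg (fun x : ℕ => (x : ℝ)) this.symm
    push_cast at hc
    rw [he, hD, hS2]
    have h2 : ∑ w ∈ V, ((U.filter (fun u => G.Adj u w)).card : ℝ) ^ 2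
        = ∑ w ∈ V, ((U.filter (fun u => G.Adj u w)).card : ℝ)
          * ((U.filter (fun u => G.Adj u w)).card : ℝ) :=
      Finset.sum_congr rfl fun w _ => pow_two _
    rw [h2]
    linarith [hc]
  have hcs1 : e ^ 2 ≤ n * S2 := by
    have h := sq_sum_le_card_mul_sum_sq (s := V)
      (f := fun w => ((U.filter (fun u => G.Adj u w)).card : ℝ))
    have h1 : (∑ w ∈ V, ((U.filter (fun u => G.Adj u w)).card : ℝ)) = e := by
      rw [he, he1]; push_cast; rfl
    rwa [h1, ← hS2] at h
  have hcs2 : D ^ 2 ≤ m ^ 2 * T := by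
    have h := sq_sum_le_card_mul_sum_sq (s := U.offDiag)
      (f := fun p => ((V.filter (fun w => G.Adj p.1 w ∧ G.Adj p.2 w)).card : ℝ))
    rw [← hD, ← hT] at h
    have hcard : ((U.offDiag.card : ℕ) : ℝ) ≤ m ^ 2 := by
      rw [Finset.offDiag_card]
      calc ((U.card * U.card - U.card : ℕ) : ℝ) ≤ ((U.card * U.card : ℕ) : ℝ) := by
            exact_mod_cast Nat.sub_le _ _
        _ = m ^ 2 := by push_cast; ring
    have hT0 : 0 ≤ T := Finset.sum_nonneg fun p _ => sq_nonneg _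
    calc D ^ 2 ≤ (U.offDiag.card : ℝ) * T := h
      _ ≤ m ^ 2 * T := mul_le_mul_of_nonneg_right hcard hT0
  -- D lower bound
  have hDlb : q * m * n * (q * m - 1) ≤ D := by
    have hS2lb : q ^ 2 * m ^ 2 * n ≤ S2 := by
      have h' : n * (q ^ 2 * m ^ 2 * n) ≤ n * S2 := by
        calc n * (q ^ 2 * m ^ 2 * n) = (q * m * n) ^ 2 := by ring
          _ ≤ n * S2 := by rw [heq]; exact hcs1
      exact le_of_mul_le_mul_left h' hn0
    linarith [hS2lb, hkey, heq]
  -- rewrite the choose sum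
  have hchoose : ∑ uu ∈ U.offDiag,
      (((V.filter (fun w => G.Adj uu.1 w ∧ G.Adj uu.2 w)).card.choose 2 : ℕ) : ℝ)
      = (T - D) / 2 := by
    rw [hT, hD, ← Finset.sum_sub_distrib, Finset.sum_div]
    refine Finset.sum_congr rfl fun p _ => ?_
    rw [Nat.cast_choose_two]
    ring
  rw [hchoose]
  -- final numeric chain
  have hD0m : m ^ 2 ≤ q * m * n * (q * m - 1) := by
    have f1 : 1000 * (m * m) ≤ q ^ 2 * n * (m * m) :=
      mul_le_mul_of_nonneg_right hq2n (mul_pos hm0 hm0).le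
    have f2 : q * n * m ≤ m * m := mul_le_mul_of_nonneg_right hqnm hm0.le
    nlinarith [f1, f2, sq_nonneg m]
  have hstep2 : q * m * n * (q * m - 1) * (q * m * n * (q * m - 1)) -
      q * m * n * (q * m - 1) * m ^ 2 ≤ D ^ 2 - D * m ^ 2 := by
    have hpos : (0:ℝ) ≤ (D - q * m * n * (q * m - 1))
        * (D + q * m * n * (q * m - 1) - m ^ 2) :=
      mul_nonneg (sub_nonneg.2 hDlb) (by linarith [hD0m, hDlb, sq_nonneg m])
    nlinarith [hpos]
  have hstep3 : (1 - ε ^ 8) * q ^ 4 * m ^ 2 * n ^ 2 * m ^ 2 ≤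
      q * m * n * (q * m - 1) * (q * m * n * (q * m - 1)) -
      q * m * n * (q * m - 1) * m ^ 2 := by
    have h1 : 3 * (q ^ 2 * m ^ 4 * n) ≤ ε ^ 8 * q ^ 4 * m ^ 4 * n ^ 2 := by
      have h := mul_le_mul_of_nonneg_right hA
        (show (0:ℝ) ≤ q ^ 2 * m ^ 4 * n by positivity)
      calc 3 * (q ^ 2 * m ^ 4 * n) ≤ ε ^ 8 * q ^ 2 * n * (q ^ 2 * m ^ 4 * n) := h
        _ = ε ^ 8 * q ^ 4 * m ^ 4 * n ^ 2 := by ring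
    have h2 : 2 * (q ^ 3 * m ^ 3 * n ^ 2) ≤ 2 * (q ^ 2 * m ^ 4 * n) := by
      have h := mul_le_mul_of_nonneg_left hqnm
        (show (0:ℝ) ≤ 2 * (q ^ 2 * m ^ 3 * n) by positivity)
      calc 2 * (q ^ 3 * m ^ 3 * n ^ 2) = 2 * (q ^ 2 * m ^ 3 * n) * (q * n) := by ring
        _ ≤ 2 * (q ^ 2 * m ^ 3 * n) * m := h
        _ = 2 * (q ^ 2 * m ^ 4 * n) := by ring
    have hp1 : (0:ℝ) ≤ q ^ 2 * m ^ 2 * n ^ 2 := by positivity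
    have hp2 : (0:ℝ) ≤ q * m ^ 3 * n := by positivity
    nlinarith [h1, h2, hp1, hp2]
  have hfinal : (1 - ε ^ 8) * q ^ 4 * m ^ 2 * n ^ 2 ≤ T - D := by
    have hm2 : (0:ℝ) < m ^ 2 := by positivity
    rw [← mul_le_mul_iff_of_pos_right hm2]
    calc (1 - ε ^ 8) * q ^ 4 * m ^ 2 * n ^ 2 * m ^ 2
        ≤ D ^ 2 - D * m ^ 2 := le_trans hstep3 hstep2
      _ ≤ m ^ 2 * T - D * m ^ 2 := by linarith [hcs2]
      _ = (T - D) * m ^ 2 := by ring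
  linarith [hfinal]
end

section
/- Let 0 < ε ≤ 10^{-3}, and let G be a bipartite graph with vertex classes U and V of sizes m ≥ n ≥ 2ε^{-9}. Suppose G has density q ≥ ε^{-10}·n^{-1/2} and G is not (ε)-regular, i.e. there exist U' ⊆ U and V' ⊆ V with |U'| = ⌈ε m⌉ (or at least εm) and |V'| ≥ εn such that |d(U',V') - q| > εq. Then the number of copies of C₄ in G is at least (1 + ε^{13})·q⁴·m²n²/4. -/
open Finset
open scoped Classical

variable {α : Type*} [Fintype α] [DecidableEq α]

section Helpers

lemma stmt6_hcol {γ : Type*} (U : Finset α) (W : Finset γ) (F : α → γ → ℝ) :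
    ∑ u ∈ U, ∑ u' ∈ U, ∑ w ∈ W, F u w * F u' w = ∑ w ∈ W, (∑ u ∈ U, F u w)^2 := by
  have h1 : ∀ u ∈ U, ∑ u' ∈ U, ∑ w ∈ W, F u w * F u' w
      = ∑ w ∈ W, F u w * ∑ u' ∈ U, F u' w := by
    intro u _
    rw [Finset.sum_comm]
    exact Finset.sum_congr rfl fun w _ => by rw [Finset.mul_sum]
  rw [Finset.sum_congr rfl h1, Finset.sum_comm]
  exact Finset.sum_congr rfl fun w _ => by rw [sq, ← Finset.sum_mul]

lemma stmt6_hswap (U V : Finset α) (B : α → α → ℝ) :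
    ∑ u ∈ U, ∑ u' ∈ U, (∑ w ∈ V, B u w * B u' w)^2
      = ∑ w ∈ V, ∑ w' ∈ V, (∑ u ∈ U, B u w * B u w')^2 := by
  have h1 : ∀ u u' : α, (∑ w ∈ V, B u w * B u' w)^2
      = ∑ wp ∈ V ×ˢ V, (B u wp.1 * B u wp.2) * (B u' wp.1 * B u' wp.2) := by
    intro u u'
    rw [sq, Finset.sum_mul_sum, Finset.sum_product]
    exact Finset.sum_congr rfl fun w _ => Finset.sum_congr rfl fun w' _ => by ring
  calc ∑ u ∈ U, ∑ u' ∈ U, (∑ w ∈ V, B u w * B u' w)^2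
      = ∑ u ∈ U, ∑ u' ∈ U, ∑ wp ∈ V ×ˢ V,
        (fun a (pp : α × α) => B a pp.1 * B a pp.2) u wp
          * (fun a (pp : α × α) => B a pp.1 * B a pp.2) u' wp :=
        Finset.sum_congr rfl fun u _ => Finset.sum_congr rfl fun u' _ => h1 u u'
    _ = ∑ wp ∈ V ×ˢ V, (∑ u ∈ U, B u wp.1 * B u wp.2)^2 := stmt6_hcol U (V ×ˢ V) _
    _ = ∑ w ∈ V, ∑ w' ∈ V, (∑ u ∈ U, B u w * B u w')^2 := by rw [Finset.sum_product]

lemma stmt6_sq_sum_sum_le {γ : Type*} (s : Finset γ) (F : γ → γ → ℝ) :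
    (∑ i ∈ s, ∑ j ∈ s, F i j)^2 ≤ ((s.card:ℝ))^2 * ∑ i ∈ s, ∑ j ∈ s, (F i j)^2 := by
  calc (∑ i ∈ s, ∑ j ∈ s, F i j)^2 ≤ (s.card:ℝ) * ∑ i ∈ s, (∑ j ∈ s, F i j)^2 :=
        sq_sum_le_card_mul_sum_sq
    _ ≤ (s.card:ℝ) * ∑ i ∈ s, ((s.card:ℝ) * ∑ j ∈ s, (F i j)^2) := by
        gcongr with i _
        exact sq_sum_le_card_mul_sum_sq
    _ = ((s.card:ℝ))^2 * ∑ i ∈ s, ∑ j ∈ s, (F i j)^2 := by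
        rw [← Finset.mul_sum]; ring

lemma stmt6_sum_sq_subset (V' V : Finset α) (h : V' ⊆ V) (F : α → α → ℝ) :
    ∑ w ∈ V', ∑ w' ∈ V', (F w w')^2 ≤ ∑ w ∈ V, ∑ w' ∈ V, (F w w')^2 := by
  calc ∑ w ∈ V', ∑ w' ∈ V', (F w w')^2 ≤ ∑ w ∈ V', ∑ w' ∈ V, (F w w')^2 := by
        refine Finset.sum_le_sum fun w _ => ?_
        exact Finset.sum_le_sum_of_subset_of_nonneg h (fun i _ _ => by positivity)
    _ ≤ ∑ w ∈ V, ∑ w' ∈ V, (F w w')^2 :=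
        Finset.sum_le_sum_of_subset_of_nonneg h (fun i _ _ => by positivity)

lemma stmt6_sq_expand_swap {γ : Type*} (U : Finset α) (W : Finset γ) (B : α → γ → ℝ) :
    ∑ u ∈ U, (∑ w ∈ W, B u w)^2 = ∑ w ∈ W, ∑ w' ∈ W, ∑ u ∈ U, B u w * B u w' := by
  have h1 : ∀ u ∈ U, (∑ w ∈ W, B u w)^2 = ∑ w ∈ W, ∑ w' ∈ W, B u w * B u w' := by
    intro u _; rw [sq, Finset.sum_mul_sum]
  rw [Finset.sum_congr rfl h1, Finset.sum_comm]
  exact Finset.sum_congr rfl fun w _ => Finset.sum_comm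

lemma stmt6_sum_centered {γ : Type*} (V : Finset γ) (h : γ → ℝ) (a : ℝ) :
    ∑ w ∈ V, (h w - a)^2 = ∑ w ∈ V, (h w)^2 - 2*a*(∑ w ∈ V, h w) + (V.card:ℝ)*a^2 := by
  have h1 : ∀ w ∈ V, (h w - a)^2 = (h w)^2 - 2*a*(h w) + a^2 := fun w _ => by ring
  rw [Finset.sum_congr rfl h1, Finset.sum_add_distrib, Finset.sum_sub_distrib,
    ← Finset.mul_sum, Finset.sum_const, nsmul_eq_mul]

lemma stmt6_codeg_decomp {γ : Type*} (V : Finset γ) (f : α → γ → ℝ) (p : α → ℝ)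
    (hp : ∀ u, ∑ w ∈ V, f u w = (V.card:ℝ) * p u) (u u' : α) :
    ∑ w ∈ V, f u w * f u' w
      = (V.card:ℝ) * (p u * p u') + ∑ w ∈ V, (f u w - p u) * (f u' w - p u') := by
  have h1 : ∀ w ∈ V, (f u w - p u) * (f u' w - p u')
      = f u w * f u' w - p u' * f u w - p u * f u' w + p u * p u' := fun w _ => by ring
  rw [Finset.sum_congr rfl h1, Finset.sum_add_distrib, Finset.sum_sub_distrib,
    Finset.sum_sub_distrib, ← Finset.mul_sum, ← Finset.mul_sum, hp u, hp u',
    Finset.sum_const, nsmul_eq_mul]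
  ring

lemma stmt6_T_lower (U V : Finset α) (f : α → α → ℝ) (p : α → ℝ)
    (hp : ∀ u, ∑ w ∈ V, f u w = (V.card:ℝ) * p u) :
    ((V.card:ℝ) * ∑ u ∈ U, (p u)^2)^2
      + ∑ u ∈ U, ∑ u' ∈ U, (∑ w ∈ V, (f u w - p u) * (f u' w - p u'))^2
      ≤ ∑ u ∈ U, ∑ u' ∈ U, (∑ w ∈ V, f u w * f u' w)^2 := by
  set N := (V.card:ℝ) with hN
  have key : ∀ u ∈ U, ∀ u' ∈ U, (∑ w ∈ V, f u w * f u' w)^2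
      = (N*(p u*p u'))^2
        + 2*N*(∑ w ∈ V, (p u * (f u w - p u)) * (p u' * (f u' w - p u')))
        + (∑ w ∈ V, (f u w - p u)*(f u' w - p u'))^2 := by
    intro u _ u' _
    rw [stmt6_codeg_decomp V f p hp u u']
    have h2 : (∑ w ∈ V, (p u * (f u w - p u)) * (p u' * (f u' w - p u')))
        = (p u * p u') * (∑ w ∈ V, (f u w - p u)*(f u' w - p u')) := by
      rw [Finset.mul_sum]; exact Finset.sum_congr rfl fun w _ => by ring
    rw [h2]; ring
  have hRHS : ∑ u ∈ U, ∑ u' ∈ U, (∑ w ∈ V, f u w * f u' w)^2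
      = (∑ u ∈ U, ∑ u' ∈ U, (N*(p u*p u'))^2)
        + 2*N*(∑ w ∈ V, (∑ u ∈ U, p u * (f u w - p u))^2)
        + ∑ u ∈ U, ∑ u' ∈ U, (∑ w ∈ V, (f u w - p u)*(f u' w - p u'))^2 := by
    rw [Finset.sum_congr rfl fun u hu => Finset.sum_congr rfl fun u' hu' => key u hu u' hu']
    rw [← stmt6_hcol U V (fun u w => p u * (f u w - p u))]
    simp only [Finset.sum_add_distrib, ← Finset.mul_sum]
  have hfirst : ∑ u ∈ U, ∑ u' ∈ U, (N*(p u*p u'))^2 = (N * ∑ u ∈ U, (p u)^2)^2 := by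
    calc ∑ u ∈ U, ∑ u' ∈ U, (N*(p u*p u'))^2
        = N^2 * ∑ u ∈ U, ∑ u' ∈ U, (p u)^2 * (p u')^2 := by
          rw [Finset.mul_sum]
          refine Finset.sum_congr rfl fun u _ => ?_
          rw [Finset.mul_sum]
          exact Finset.sum_congr rfl fun u' _ => by ring
      _ = N^2 * ((∑ u ∈ U, (p u)^2) * (∑ u ∈ U, (p u)^2)) := by rw [Finset.sum_mul_sum]
      _ = (N * ∑ u ∈ U, (p u)^2)^2 := by ring
  have hmid : 0 ≤ 2*N*(∑ w ∈ V, (∑ u ∈ U, p u * (f u w - p u))^2) := by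
    have hN0 : (0:ℝ) ≤ N := by rw [hN]; positivity
    positivity
  rw [hRHS, hfirst]
  linarith

lemma stmt6_arith (ε q M N D Q E : ℝ) (hε0 : 0 < ε) (hε : ε ≤ 1/1000)
    (hM0 : 0 < M) (hN0 : 0 < N) (hq0 : 0 < q)
    (hD : 0 ≤ D) (hQ : 0 ≤ Q) (hE : 0 ≤ E)
    (hA : 1 ≤ ε^20 * (q^2*N)) (hB : 1 ≤ ε^20 * (q^2*M))
    (hQE : E^2 ≤ Q * M^2)
    (hcase : ε^8 * (q^4*M^2*N^2) ≤ 16*Q ∨ ε^3 * (q^2*M*N) ≤ 4*D) :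
    (1+ε^13) * (q^4*M^2*N^2) + (q^2*M*N^2 + N*D) + (q^2*M^2*N + E)
      ≤ (q^2*M*N + D)^2 + Q := by
  set K := q^4*M^2*N^2 with hK
  have hK0 : 0 < K := by rw [hK]; positivity
  have hε20 : ε^20 ≤ 1 := by
    calc ε^20 ≤ (1/1000:ℝ)^20 := pow_le_pow_left₀ hε0.le hε 20
    _ ≤ 1 := by norm_num
  have hqm1 : 1 ≤ q^2*M := by
    calc (1:ℝ) ≤ ε^20 * (q^2*M) := hB
    _ ≤ q^2*M := mul_le_of_le_one_left (by positivity) hε20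
  have f1 : q^2*M*N^2 ≤ ε^20*K := by
    have h := mul_le_mul_of_nonneg_left hB (show (0:ℝ) ≤ q^2*M*N^2 by positivity)
    calc q^2*M*N^2 = q^2*M*N^2 * 1 := by ring
    _ ≤ q^2*M*N^2 * (ε^20*(q^2*M)) := h
    _ = ε^20*K := by rw [hK]; ring
  have f2 : q^2*M^2*N ≤ ε^20*K := by
    have h := mul_le_mul_of_nonneg_left hA (show (0:ℝ) ≤ q^2*M^2*N by positivity)
    calc q^2*M^2*N = q^2*M^2*N * 1 := by ring
    _ ≤ q^2*M^2*N * (ε^20*(q^2*N)) := h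
    _ = ε^20*K := by rw [hK]; ring
  have hprod : (0:ℝ) ≤ q^2*M*N*D := by positivity
  have f3 : N*D ≤ q^2*M*N*D := by
    have h := mul_le_mul_of_nonneg_right hqm1 (show (0:ℝ) ≤ N*D by positivity)
    calc N*D = 1*(N*D) := by ring
    _ ≤ (q^2*M)*(N*D) := h
    _ = q^2*M*N*D := by ring
  have f4 : M^2 ≤ ε^40*K := by
    have hx : 1 ≤ (ε^20*(q^2*N))^2 := by nlinarith [hA]
    have h := mul_le_mul_of_nonneg_left hx (show (0:ℝ) ≤ M^2 by positivity)
    calc M^2 = M^2 * 1 := by ring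
    _ ≤ M^2 * (ε^20*(q^2*N))^2 := h
    _ = ε^40*K := by rw [hK]; ring
  have hsmallK : ε^13*K + 2*(ε^20*K) + 2*(ε^40*K) ≤ ε^8*K/32 := by
    have h5 : ε^5 ≤ (1/1000:ℝ)^5 := pow_le_pow_left₀ hε0.le hε 5
    have h12 : ε^12 ≤ (1/1000:ℝ)^12 := pow_le_pow_left₀ hε0.le hε 12
    have h32 : ε^32 ≤ (1/1000:ℝ)^32 := pow_le_pow_left₀ hε0.le hε 32
    have hsmall : ε^13 + 2*ε^20 + 2*ε^40 ≤ ε^8/32 := by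
      have hε8 : (0:ℝ) < ε^8 := by positivity
      have e13 : ε^13 = ε^8 * ε^5 := by ring
      have e20 : ε^20 = ε^8 * ε^12 := by ring
      have e40 : ε^40 = ε^8 * ε^32 := by ring
      rw [e13, e20, e40]
      nlinarith [hε8, h5, h12, h32]
    have h := mul_le_mul_of_nonneg_right hsmall hK0.le
    calc ε^13*K + 2*(ε^20*K) + 2*(ε^40*K) = (ε^13 + 2*ε^20 + 2*ε^40)*K := by ring
    _ ≤ (ε^8/32)*K := h
    _ = ε^8*K/32 := by ring
  have hε38K : ε^8*K ≤ ε^3*K := by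
    have h5 : ε^5 ≤ 1 := by
      calc ε^5 ≤ (1/1000:ℝ)^5 := pow_le_pow_left₀ hε0.le hε 5
      _ ≤ 1 := by norm_num
    have h : ε^8 ≤ ε^3 := by
      calc ε^8 = ε^3 * ε^5 := by ring
      _ ≤ ε^3 * 1 := mul_le_mul_of_nonneg_left h5 (by positivity)
      _ = ε^3 := by ring
    exact mul_le_mul_of_nonneg_right h hK0.le
  have hexp : (q^2*M*N + D)^2 = K + 2*(q^2*M*N*D) + D^2 := by rw [hK]; ring
  rw [hexp]
  have hDcase : ε^3 * (q^2*M*N) ≤ 4*D → ε^3*K ≤ 4*(q^2*M*N*D) := by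
    intro hc
    have h := mul_le_mul_of_nonneg_left hc (show (0:ℝ) ≤ q^2*M*N by positivity)
    calc ε^3*K = (q^2*M*N) * (ε^3*(q^2*M*N)) := by rw [hK]; ring
    _ ≤ (q^2*M*N) * (4*D) := h
    _ = 4*(q^2*M*N*D) := by ring
  by_cases hE2 : E ≤ 2*M^2
  · have fE : E ≤ 2*(ε^40*K) := by linarith
    rcases hcase with hc | hc
    · linarith [sq_nonneg D]
    · have hcD := hDcase hc
      linarith [sq_nonneg D]
  · push_neg at hE2
    have hM2 : (0:ℝ) < M^2 := by positivity
    have hEpos : (0:ℝ) < E := lt_trans (by positivity) hE2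
    have hQ2E : 2*E ≤ Q := by
      have h1 : 2*E*M^2 < Q*M^2 := by nlinarith [hQE, hE2, hEpos]
      exact le_of_lt (lt_of_mul_lt_mul_right h1 hM2.le)
    rcases hcase with hc | hc
    · linarith [sq_nonneg D]
    · have hcD := hDcase hc
      linarith [sq_nonneg D]

end Helpers

set_option maxHeartbeats 2000000 in
/-- counting `C₄` in irregular bipartite pairs (improved lower bound). -/
theorem stmt_6 (G : SimpleGraph α) [DecidableRel G.Adj] (U V : Finset α) (hUV : Disjoint U V)
    (hbip : ∀ x y, G.Adj x y → (x ∈ U ∧ y ∈ V) ∨ (x ∈ V ∧ y ∈ U))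
    (ε q : ℝ) (hε0 : 0 < ε) (hε : ε ≤ 1 / 1000)
    (hmn : (V.card : ℝ) ≤ (U.card : ℝ))
    (hn : 2 * ε ^ (-(9 : ℝ)) ≤ (V.card : ℝ))
    (hq : q = (eB G U V : ℝ) / ((U.card : ℝ) * (V.card : ℝ)))
    (hqlb : ε ^ (-(10 : ℝ)) * (V.card : ℝ) ^ (-(1 / 2 : ℝ)) ≤ q)
    (hirr : ∃ U' ⊆ U, ∃ V' ⊆ V, ε * (U.card : ℝ) ≤ (U'.card : ℝ) ∧
      ε * (V.card : ℝ) ≤ (V'.card : ℝ) ∧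
      ε * q < |(eB G U' V' : ℝ) / ((U'.card : ℝ) * (V'.card : ℝ)) - q|) :
    (1 + ε ^ 13) * q ^ 4 * (U.card : ℝ) ^ 2 * (V.card : ℝ) ^ 2 / 4 ≤
      (1 / 2) * ∑ uu ∈ U.offDiag,
        (((V.filter (fun w => G.Adj uu.1 w ∧ G.Adj uu.2 w)).card.choose 2 : ℕ) : ℝ) := by
  obtain ⟨U', hU'sub, V', hV'sub, hU'c, hV'c, hdev⟩ := hirr
  set M := (U.card : ℝ) with hMdef
  set N := (V.card : ℝ) with hNdef
  -- ### positivity of basic quantities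
  have hN0 : (0:ℝ) < N := by
    have h1 : (0:ℝ) < ε ^ (-(9:ℝ)) := Real.rpow_pos_of_pos hε0 _
    linarith
  have hM0 : (0:ℝ) < M := lt_of_lt_of_le hN0 hmn
  have hq0 : (0:ℝ) < q := by
    have h1 : (0:ℝ) < ε ^ (-(10:ℝ)) * N ^ (-(1/2:ℝ)) :=
      mul_pos (Real.rpow_pos_of_pos hε0 _) (Real.rpow_pos_of_pos hN0 _)
    linarith
  have hm'0 : (0:ℝ) < (U'.card : ℝ) := lt_of_lt_of_le (by positivity) hU'c
  have hn'0 : (0:ℝ) < (V'.card : ℝ) := lt_of_lt_of_le (by positivity) hV'c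
  -- ### the key numeric facts from the density lower bound
  have hsqrtN : Real.sqrt N ^ 2 = N := Real.sq_sqrt hN0.le
  have e10 : ε ^ (-(10:ℝ)) = (ε^10)⁻¹ := by
    rw [show (-(10:ℝ)) = -((10:ℕ):ℝ) by norm_num, Real.rpow_neg hε0.le, Real.rpow_natCast]
  have eN : N ^ (-(1/2:ℝ)) = (Real.sqrt N)⁻¹ := by
    rw [Real.rpow_neg hN0.le, Real.sqrt_eq_rpow]
  have hq1 : 1 ≤ q * (ε^10 * Real.sqrt N) := by
    rw [e10, eN, ← mul_inv] at hqlb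
    have hpos : (0:ℝ) < ε^10 * Real.sqrt N := by positivity
    calc (1:ℝ) = (ε^10 * Real.sqrt N)⁻¹ * (ε^10 * Real.sqrt N) := by field_simp
    _ ≤ q * (ε^10 * Real.sqrt N) := mul_le_mul_of_nonneg_right hqlb hpos.le
  have hA : 1 ≤ ε^20 * (q^2*N) := by
    have h := mul_le_mul hq1 hq1 (by norm_num) (by positivity)
    calc (1:ℝ) = 1*1 := by norm_num
    _ ≤ (q * (ε^10 * Real.sqrt N)) * (q * (ε^10 * Real.sqrt N)) := h
    _ = ε^20 * (q^2 * (Real.sqrt N^2)) := by ring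
    _ = ε^20 * (q^2*N) := by rw [hsqrtN]
  have hBB : 1 ≤ ε^20 * (q^2*M) := by
    have h1 : q^2*N ≤ q^2*M := mul_le_mul_of_nonneg_left hmn (by positivity)
    have h2 : ε^20*(q^2*N) ≤ ε^20*(q^2*M) := mul_le_mul_of_nonneg_left h1 (by positivity)
    linarith
  -- ### edge-indicator function and normalized degrees
  set f : α → α → ℝ := fun u w => if G.Adj u w then 1 else 0 with hf
  set p : α → ℝ := fun u => (∑ w ∈ V, f u w) / N with hp
  clear_value M N f p
  have hpN : ∀ u, ∑ w ∈ V, f u w = N * p u := by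
    intro u
    rw [hp]
    field_simp
  have hcast : ∀ A B' : Finset α, (eB G A B' : ℝ) = ∑ a ∈ A, ∑ w ∈ B', f a w := by
    intro A B'
    rw [eB]
    push_cast
    refine Finset.sum_congr rfl fun a _ => ?_
    rw [hf]
    simp [Finset.sum_boole]
  have hsum_p : ∑ u ∈ U, p u = q * M := by
    have h1 : ∑ u ∈ U, ∑ w ∈ V, f u w = q * (M*N) := by
      rw [← hcast U V, hq]
      field_simp
    have h2 : ∑ u ∈ U, p u = (∑ u ∈ U, ∑ w ∈ V, f u w) / N := by
      rw [hp, Finset.sum_div]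
    rw [h2, h1]
    field_simp
  -- ### main quantities
  set Dv : ℝ := N * ∑ u ∈ U, (p u - q)^2 with hDv
  set Qv : ℝ := ∑ u ∈ U, ∑ u' ∈ U, (∑ w ∈ V, (f u w - p u) * (f u' w - p u'))^2 with hQv
  set Ev : ℝ := ∑ w ∈ V, ((∑ u ∈ U, f u w) - q*M)^2 with hEv
  clear_value Dv Qv Ev
  have hDv0 : 0 ≤ Dv := by rw [hDv]; positivity
  have hQv0 : 0 ≤ Qv := by rw [hQv]; positivity
  have hEv0 : 0 ≤ Ev := by rw [hEv]; positivity
  have hNp2 : N * ∑ u ∈ U, (p u)^2 = q^2*M*N + Dv := by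
    have h1 := stmt6_sum_centered U p q
    rw [hDv, h1, hsum_p, ← hMdef]
    ring
  -- ### lower bound for T
  have hT : (q^2*M*N + Dv)^2 + Qv ≤ ∑ u ∈ U, ∑ u' ∈ U, (∑ w ∈ V, f u w * f u' w)^2 := by
    have hpN' : ∀ u, ∑ w ∈ V, f u w = ((V.card:ℝ)) * p u := by
      intro u; rw [← hNdef]; exact hpN u
    have h := stmt6_T_lower U V f p hpN'
    rw [← hNdef, hNp2, ← hQv] at h
    exact h
  -- ### column sums
  have hgsum : ∑ w ∈ V, ∑ u ∈ U, f u w = q*(M*N) := by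
    rw [Finset.sum_comm, ← hcast U V, hq]
    field_simp
  have hCsum : ∑ u ∈ U, ∑ u' ∈ U, (∑ w ∈ V, f u w * f u' w) = q^2*M^2*N + Ev := by
    rw [stmt6_hcol U V f]
    have h1 := stmt6_sum_centered V (fun w => ∑ u ∈ U, f u w) (q*M)
    rw [hgsum, ← hNdef] at h1
    rw [hEv] at *
    rw [show ∑ w ∈ V, ((∑ u ∈ U, f u w) - q*M)^2
        = ∑ w ∈ V, (∑ u ∈ U, f u w)^2 - 2*(q*M)*(q*(M*N)) + N*(q*M)^2 from h1]
    ring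
  -- ### E vs Q
  have hEQ : Ev^2 ≤ Qv * M^2 := by
    have hiden : ∑ u ∈ U, ∑ u' ∈ U, (∑ w ∈ V, (f u w - p u) * (f u' w - p u')) = Ev := by
      rw [stmt6_hcol U V (fun u w => f u w - p u), hEv]
      refine Finset.sum_congr rfl fun w _ => ?_
      congr 1
      rw [Finset.sum_sub_distrib, hsum_p]
    have h := stmt6_sq_sum_sum_le U (fun u u' => ∑ w ∈ V, (f u w - p u) * (f u' w - p u'))
    rw [hiden, ← hQv, ← hMdef] at h
    linarith [h, mul_comm (M^2) Qv]
  -- ### diagonal terms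
  have hdiag_c : ∀ u, (∑ w ∈ V, f u w * f u w) = N * p u := by
    intro u
    rw [← hpN u]
    refine Finset.sum_congr rfl fun w _ => ?_
    rw [hf]
    by_cases h : G.Adj u w <;> simp [h]
  have hSdiag : ∑ u ∈ U, (∑ w ∈ V, f u w * f u w)^2 = q^2*M*N^2 + N*Dv := by
    have h1 : ∑ u ∈ U, (∑ w ∈ V, f u w * f u w)^2 = ∑ u ∈ U, N^2 * (p u)^2 :=
      Finset.sum_congr rfl fun u _ => by rw [hdiag_c u]; ring
    rw [h1, ← Finset.mul_sum]
    rw [show N^2 * ∑ u ∈ U, (p u)^2 = N * (N * ∑ u ∈ U, (p u)^2) by ring, hNp2]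
    ring
  have hdsum : ∑ u ∈ U, (∑ w ∈ V, f u w * f u w) = q*(M*N) := by
    have h1 : ∑ u ∈ U, (∑ w ∈ V, f u w * f u w) = ∑ u ∈ U, N * p u :=
      Finset.sum_congr rfl fun u _ => hdiag_c u
    rw [h1, ← Finset.mul_sum, hsum_p]
    ring
  -- ### the irregularity dichotomy
  have hcase : ε^8 * (q^4*M^2*N^2) ≤ 16*Qv ∨ ε^3 * (q^2*M*N) ≤ 4*Dv := by
    set m' := (U'.card : ℝ) with hm'
    set n' := (V'.card : ℝ) with hn'
    clear_value m' n'
    have hdev' : ε*q*(m'*n') < |(∑ u ∈ U', ∑ w ∈ V', f u w) - q*(m'*n')| := by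
      rw [← hcast U' V']
      have h6 := hdev
      have hne : (m'*n') ≠ 0 := (mul_pos hm'0 hn'0).ne'
      rw [show (eB G U' V' : ℝ)/(m'*n') - q = ((eB G U' V' : ℝ) - q*(m'*n'))/(m'*n') by
        rw [sub_div, mul_div_cancel_right₀ q hne]] at h6
      rw [abs_div, abs_of_pos (mul_pos hm'0 hn'0)] at h6
      exact (lt_div_iff₀ (mul_pos hm'0 hn'0)).mp h6
    set X0 : ℝ := ∑ u ∈ U', (∑ w ∈ V', (f u w - p u)) with hX0
    set F : ℝ := ∑ u ∈ U', (p u - q) with hF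
    clear_value X0 F
    have hdecomp : (∑ u ∈ U', ∑ w ∈ V', f u w) - q*(m'*n') = X0 + n' * F := by
      have hXa : X0 = (∑ u ∈ U', ∑ w ∈ V', f u w) - n' * ∑ u ∈ U', p u := by
        rw [hX0]
        have h7 : ∀ u ∈ U', ∑ w ∈ V', (f u w - p u) = (∑ w ∈ V', f u w) - n' * p u := by
          intro u _
          rw [Finset.sum_sub_distrib, Finset.sum_const, nsmul_eq_mul, ← hn']
        rw [Finset.sum_congr rfl h7, Finset.sum_sub_distrib, ← Finset.mul_sum]
      have hFa : F = (∑ u ∈ U', p u) - q * m' := by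
        rw [hF, Finset.sum_sub_distrib, Finset.sum_const, nsmul_eq_mul, ← hm']; ring
      rw [hXa, hFa]
      ring
    rw [hdecomp] at hdev'
    have habs : abs (X0 + n'*F) ≤ abs X0 + n'*(abs F) := by
      calc abs (X0 + n'*F) ≤ abs X0 + abs (n'*F) := abs_add_le _ _
      _ = abs X0 + n'*(abs F) := by rw [abs_mul, abs_of_pos hn'0]
    rcases le_or_gt (abs X0) (ε*q*(m'*n')/2) with hX | hX
    · -- case (b): degree deviation
      right
      have hFbig : ε*q*m'/2 ≤ abs F := by
        have h8 : ε*q*(m'*n')/2 ≤ n'*(abs F) := by linarith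
        rw [show ε*q*(m'*n')/2 = (ε*q*m'/2)*n' by ring] at h8
        rw [show n'*(abs F) = (abs F)*n' by ring] at h8
        exact le_of_mul_le_mul_right h8 hn'0
      have hF2 : (ε*q*m'/2)^2 ≤ F^2 := by
        have h9 := pow_le_pow_left₀ (by positivity) hFbig 2
        rwa [sq_abs] at h9
      have h8 : F^2 ≤ m' * ∑ u ∈ U', (p u - q)^2 := by
        rw [hF, hm']
        exact sq_sum_le_card_mul_sum_sq
      have h9 : ∑ u ∈ U', (p u - q)^2 ≤ ∑ u ∈ U, (p u - q)^2 :=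
        Finset.sum_le_sum_of_subset_of_nonneg hU'sub (fun _ _ _ => sq_nonneg _)
      have hCS : N*F^2 ≤ m'*Dv := by
        calc N*F^2 ≤ N*(m' * ∑ u ∈ U', (p u - q)^2) := mul_le_mul_of_nonneg_left h8 hN0.le
        _ ≤ N*(m' * ∑ u ∈ U, (p u - q)^2) :=
            mul_le_mul_of_nonneg_left (mul_le_mul_of_nonneg_left h9 hm'0.le) hN0.le
        _ = m' * Dv := by rw [hDv]; ring
      have hgoal_m : (ε^3*(q^2*M*N))*m' ≤ (4*Dv)*m' := by
        have h10 : N*(ε*q*m'/2)^2 ≤ m'*Dv :=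
          le_trans (mul_le_mul_of_nonneg_left hF2 hN0.le) hCS
        have h11 : (ε*M)*(ε^2*q^2*m'*N) ≤ m'*(ε^2*q^2*m'*N) :=
          mul_le_mul_of_nonneg_right hU'c (by positivity)
        linarith [h10, h11]
      exact le_of_mul_le_mul_right hgoal_m hm'0
    · -- case (a): C4 count deviation
      left
      have step1 : X0^2 ≤ m' * ∑ u ∈ U, (∑ w ∈ V', (f u w - p u))^2 := by
        calc X0^2 ≤ m' * ∑ u ∈ U', (∑ w ∈ V', (f u w - p u))^2 := by
              rw [hX0, hm']
              exact sq_sum_le_card_mul_sum_sq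
        _ ≤ m' * ∑ u ∈ U, (∑ w ∈ V', (f u w - p u))^2 :=
              mul_le_mul_of_nonneg_left
                (Finset.sum_le_sum_of_subset_of_nonneg hU'sub (fun _ _ _ => sq_nonneg _))
                hm'0.le
      have step3 : ∑ u ∈ U, (∑ w ∈ V', (f u w - p u))^2
          = ∑ w ∈ V', ∑ w' ∈ V', (∑ u ∈ U, (f u w - p u) * (f u w' - p u)) :=
        stmt6_sq_expand_swap U V' (fun u w => f u w - p u)
      have step4 : (∑ u ∈ U, (∑ w ∈ V', (f u w - p u))^2)^2 ≤ n'^2 * Qv := by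
        rw [step3]
        calc (∑ w ∈ V', ∑ w' ∈ V', (∑ u ∈ U, (f u w - p u) * (f u w' - p u)))^2
            ≤ n'^2 * ∑ w ∈ V', ∑ w' ∈ V', (∑ u ∈ U, (f u w - p u) * (f u w' - p u))^2 := by
              rw [hn']
              exact stmt6_sq_sum_sum_le V' _
          _ ≤ n'^2 * ∑ w ∈ V, ∑ w' ∈ V, (∑ u ∈ U, (f u w - p u) * (f u w' - p u))^2 :=
              mul_le_mul_of_nonneg_left
                (stmt6_sum_sq_subset V' V hV'sub _) (by positivity)
          _ = n'^2 * Qv := by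
              rw [hQv, stmt6_hswap U V (fun u w => f u w - p u)]
      have hX4 : (ε*q*(m'*n')/2)^4 ≤ m'^2 * (n'^2 * Qv) := by
        have h12 : (ε*q*(m'*n')/2)^4 ≤ X0^4 := by
          have h13 := pow_le_pow_left₀ (by positivity) hX.le 4
          rwa [pow_abs, abs_of_nonneg (by positivity : (0:ℝ) ≤ X0^4)] at h13
        have h14 : X0^4 ≤ m'^2 * (n'^2 * Qv) := by
          have h15 := pow_le_pow_left₀ (sq_nonneg X0) step1 2
          calc X0^4 = (X0^2)^2 := by ring
          _ ≤ (m' * ∑ u ∈ U, (∑ w ∈ V', (f u w - p u))^2)^2 := h15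
          _ = m'^2 * (∑ u ∈ U, (∑ w ∈ V', (f u w - p u))^2)^2 := by ring
          _ ≤ m'^2 * (n'^2 * Qv) := mul_le_mul_of_nonneg_left step4 (by positivity)
        linarith
      have hMm : (ε*M)^2*(ε*N)^2 ≤ m'^2*n'^2 :=
        mul_le_mul (pow_le_pow_left₀ (by positivity) hU'c 2)
          (pow_le_pow_left₀ (by positivity) hV'c 2) (by positivity) (by positivity)
      have final : (ε^8*(q^4*M^2*N^2)) * (m'^2*n'^2) ≤ (16*Qv) * (m'^2*n'^2) := by
        calc (ε^8*(q^4*M^2*N^2))*(m'^2*n'^2)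
            = (ε^4*q^4*((ε*M)^2*(ε*N)^2))*(m'^2*n'^2) := by ring
          _ ≤ (ε^4*q^4*(m'^2*n'^2))*(m'^2*n'^2) := by
              have h1 : ε^4*q^4*((ε*M)^2*(ε*N)^2) ≤ ε^4*q^4*(m'^2*n'^2) :=
                mul_le_mul_of_nonneg_left hMm (by positivity)
              exact mul_le_mul_of_nonneg_right h1 (by positivity)
          _ = 16*((ε*q*(m'*n')/2)^4) := by ring
          _ ≤ 16*(m'^2*(n'^2*Qv)) := by linarith
          _ = (16*Qv)*(m'^2*n'^2) := by ring
      exact le_of_mul_le_mul_right final (by positivity)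
  -- ### apply the arithmetic lemma
  have key := stmt6_arith ε q M N Dv Qv Ev hε0 hε hM0 hN0 hq0 hDv0 hQv0 hEv0 hA hBB hEQ hcase
  -- ### rewrite the goal
  have hcc : ∀ uu : α × α, ((V.filter (fun w => G.Adj uu.1 w ∧ G.Adj uu.2 w)).card : ℝ)
      = ∑ w ∈ V, f uu.1 w * f uu.2 w := by
    intro uu
    rw [← Finset.sum_boole]
    refine Finset.sum_congr rfl fun w _ => ?_
    rw [hf]
    by_cases h1 : G.Adj uu.1 w <;> by_cases h2 : G.Adj uu.2 w <;> simp [h1, h2]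
  have hterm : ∀ uu : α × α,
      2 * (((V.filter (fun w => G.Adj uu.1 w ∧ G.Adj uu.2 w)).card.choose 2 : ℕ) : ℝ)
      = (∑ w ∈ V, f uu.1 w * f uu.2 w)^2 - (∑ w ∈ V, f uu.1 w * f uu.2 w) := by
    intro uu
    rw [Nat.cast_choose_two ℝ, hcc uu]
    ring
  have hsum2 : 2 * ∑ uu ∈ U.offDiag,
      (((V.filter (fun w => G.Adj uu.1 w ∧ G.Adj uu.2 w)).card.choose 2 : ℕ) : ℝ)
      = ∑ uu ∈ U.offDiag,
        ((∑ w ∈ V, f uu.1 w * f uu.2 w)^2 - (∑ w ∈ V, f uu.1 w * f uu.2 w)) := by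
    rw [Finset.mul_sum]
    exact Finset.sum_congr rfl fun uu _ => hterm uu
  have hoff : ∑ uu ∈ U.offDiag,
        ((∑ w ∈ V, f uu.1 w * f uu.2 w)^2 - (∑ w ∈ V, f uu.1 w * f uu.2 w))
      = (∑ u ∈ U, ∑ u' ∈ U,
          ((∑ w ∈ V, f u w * f u' w)^2 - (∑ w ∈ V, f u w * f u' w)))
        - ∑ u ∈ U, ((∑ w ∈ V, f u w * f u w)^2 - (∑ w ∈ V, f u w * f u w)) := by
    have h1 : ∑ u ∈ U, ∑ u' ∈ U,
        ((∑ w ∈ V, f u w * f u' w)^2 - (∑ w ∈ V, f u w * f u' w))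
        = ∑ uu ∈ U ×ˢ U,
          ((∑ w ∈ V, f uu.1 w * f uu.2 w)^2 - (∑ w ∈ V, f uu.1 w * f uu.2 w)) :=
      (Finset.sum_product U U
        (fun uu => (∑ w ∈ V, f uu.1 w * f uu.2 w)^2 - (∑ w ∈ V, f uu.1 w * f uu.2 w))).symm
    rw [h1, ← Finset.diag_union_offDiag U,
      Finset.sum_union (Finset.disjoint_diag_offDiag U), Finset.sum_diag]
    ring
  have hTC : ∑ u ∈ U, ∑ u' ∈ U,
      ((∑ w ∈ V, f u w * f u' w)^2 - (∑ w ∈ V, f u w * f u' w))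
      = (∑ u ∈ U, ∑ u' ∈ U, (∑ w ∈ V, f u w * f u' w)^2) - (q^2*M^2*N + Ev) := by
    rw [← hCsum]
    rw [← Finset.sum_sub_distrib]
    exact Finset.sum_congr rfl fun u _ => by rw [← Finset.sum_sub_distrib]
  have hDG : ∑ u ∈ U, ((∑ w ∈ V, f u w * f u w)^2 - (∑ w ∈ V, f u w * f u w))
      = (q^2*M*N^2 + N*Dv) - q*(M*N) := by
    rw [← hSdiag, ← hdsum, ← Finset.sum_sub_distrib]
  -- ### conclude
  have hfinal : (1 + ε^13) * (q^4*M^2*N^2)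
      ≤ 2 * ∑ uu ∈ U.offDiag,
        (((V.filter (fun w => G.Adj uu.1 w ∧ G.Adj uu.2 w)).card.choose 2 : ℕ) : ℝ) := by
    rw [hsum2, hoff, hTC, hDG]
    have hqMN : 0 ≤ q*(M*N) := by positivity
    linarith
  calc (1 + ε ^ 13) * q ^ 4 * M ^ 2 * N ^ 2 / 4
      = ((1 + ε^13) * (q^4*M^2*N^2)) / 4 := by ring
    _ ≤ (2 * ∑ uu ∈ U.offDiag,
        (((V.filter (fun w => G.Adj uu.1 w ∧ G.Adj uu.2 w)).card.choose 2 : ℕ) : ℝ)) / 4 := by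
        linarith
    _ = (1 / 2) * ∑ uu ∈ U.offDiag,
        (((V.filter (fun w => G.Adj uu.1 w ∧ G.Adj uu.2 w)).card.choose 2 : ℕ) : ℝ) := by
        ring
end

section
/- If G is a bipartite graph with parts U (of size m) and V (of size n) and density q, and m ≥ n ≥ 2ε^{-9}, q ≥ ε^{-10} n^{-1/2} for some 0 < ε ≤ 10^{-3}, and if G is not (ε)-regular, then there is a set Ũ ⊆ U with |Ũ| ≥ εm such that the average common degree a(Ũ) := binom(|Ũ|,2)^{-1} ∑_{{u,u'} ∈ binom(Ũ,2)} codeg(u,u') satisfies a(Ũ) ≥ (1 + 2ε⁵)·q²·n. -/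
open Finset
open scoped Classical

variable {α : Type*} [Fintype α] [DecidableEq α]

section MyHelpers
variable (G : SimpleGraph α) [DecidableRel G.Adj]

lemma my_eB_swap (A B : Finset α) :
    eB G A B = ∑ b ∈ B, (A.filter fun a => G.Adj a b).card := by
  unfold eB
  simp_rw [Finset.card_filter]
  exact Finset.sum_comm

lemma my_eB_right_split (A : Finset α) {B' B : Finset α} (h : B' ⊆ B) :
    eB G A B' + eB G A (B \ B') = eB G A B := by
  unfold eB
  rw [← Finset.sum_add_distrib]
  refine Finset.sum_congr rfl fun a _ => ?_
  rw [← Finset.card_union_of_disjoint, ← Finset.filter_union, Finset.union_sdiff_of_subset h]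
  exact Finset.disjoint_filter_filter Finset.disjoint_sdiff

lemma my_eB_left_split {A' A : Finset α} (h : A' ⊆ A) (B : Finset α) :
    eB G A' B + eB G (A \ A') B = eB G A B := by
  unfold eB
  rw [← Finset.sum_union Finset.disjoint_sdiff, Finset.union_sdiff_of_subset h]

lemma my_eB_union {A A' : Finset α} (h : Disjoint A A') (B : Finset α) :
    eB G (A ∪ A') B = eB G A B + eB G A' B := by
  unfold eB; exact Finset.sum_union h

lemma my_codeg_eq (T W : Finset α) :
    ∑ uu ∈ T.offDiag, ((W.filter fun w => G.Adj uu.1 w ∧ G.Adj uu.2 w).card)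
      = ∑ w ∈ W, ((T.filter fun u => G.Adj u w).card) * ((T.filter fun u => G.Adj u w).card - 1) := by
  have h1 : ∑ uu ∈ T.offDiag, ((W.filter fun w => G.Adj uu.1 w ∧ G.Adj uu.2 w).card)
      = ∑ w ∈ W, (T.offDiag.filter fun uu => G.Adj uu.1 w ∧ G.Adj uu.2 w).card := by
    simp_rw [Finset.card_filter]
    exact Finset.sum_comm
  rw [h1]
  refine Finset.sum_congr rfl fun w _ => ?_
  have h2 : T.offDiag.filter (fun uu => G.Adj uu.1 w ∧ G.Adj uu.2 w)
      = (T.filter fun u => G.Adj u w).offDiag := by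
    ext ⟨u, v⟩
    simp only [Finset.mem_filter, Finset.mem_offDiag]
    tauto
  rw [h2, Finset.offDiag_card]
  rcases (T.filter fun u => G.Adj u w).card with _ | d
  · rfl
  · simp [Nat.succ_sub_one, Nat.mul_sub]
    ring_nf
    omega

lemma my_cs_bound (A B : Finset α) (hB : B.Nonempty) :
    ((eB G A B : ℝ))^2 / B.card ≤ ∑ b ∈ B, ((A.filter fun a => G.Adj a b).card : ℝ)^2 := by
  have h := sq_sum_le_card_mul_sum_sq (s := B)
    (f := fun b => ((A.filter fun a => G.Adj a b).card : ℝ))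
  have hc : (0:ℝ) < B.card := by exact_mod_cast Finset.card_pos.mpr hB
  rw [div_le_iff₀ hc, my_eB_swap]
  push_cast
  calc (∑ b ∈ B, ((A.filter fun a => G.Adj a b).card : ℝ))^2
      ≤ (B.card : ℝ) * ∑ b ∈ B, ((A.filter fun a => G.Adj a b).card : ℝ)^2 := h
    _ = (∑ b ∈ B, ((A.filter fun a => G.Adj a b).card : ℝ)^2) * B.card := by ring

lemma my_sel (f : α → ℕ) (s : Finset α) :
    ∀ j ≤ s.card, ∃ B ⊆ s, B.card = j ∧ j * ∑ a ∈ s, f a ≤ s.card * ∑ a ∈ B, f a := by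
  induction s using Finset.strongInduction with
  | _ s ih =>
    intro j hj
    rcases Nat.eq_zero_or_pos j with rfl | hj0
    · exact ⟨∅, Finset.empty_subset _, Finset.card_empty, by simp⟩
    rcases eq_or_lt_of_le hj with heq | hlt
    · exact ⟨s, Finset.Subset.refl _, heq.symm, by rw [heq]⟩
    · have hne : s.Nonempty := Finset.card_pos.mp (lt_of_le_of_lt (Nat.zero_le j) hlt)
      obtain ⟨x, hx, hmin⟩ := Finset.exists_min_image s f hne
      have hcard : (s.erase x).card = s.card - 1 := Finset.card_erase_of_mem hx
      have hj' : j ≤ (s.erase x).card := by omega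
      obtain ⟨B, hBsub, hBcard, hB⟩ := ih (s.erase x) (Finset.erase_ssubset hx) j hj'
      refine ⟨B, hBsub.trans (Finset.erase_subset _ _), hBcard, ?_⟩
      have h1 : s.card * f x ≤ ∑ a ∈ s, f a := by
        have := Finset.card_nsmul_le_sum s f (f x) (fun a ha => hmin a ha)
        simpa using this
      have h2 : ∑ a ∈ s.erase x, f a + f x = ∑ a ∈ s, f a := Finset.sum_erase_add s f hx
      -- (s.card - 1) * ∑_s ≤ s.card * ∑_erase
      have h3 : (s.card - 1) * ∑ a ∈ s, f a ≤ s.card * ∑ a ∈ s.erase x, f a := by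
        have e1 : s.card * ∑ a ∈ s.erase x, f a = s.card * ∑ a ∈ s, f a - s.card * f x := by
          rw [← h2]; rw [Nat.mul_add]; omega
        have e2 : (s.card - 1) * ∑ a ∈ s, f a = s.card * ∑ a ∈ s, f a - ∑ a ∈ s, f a := by
          rcases Nat.eq_zero_or_pos s.card with h | h
          · omega
          · rw [Nat.sub_mul, Nat.one_mul]
        omega
      have hpos : 0 < s.card - 1 := by omega
      have key : (s.card - 1) * (j * ∑ a ∈ s, f a) ≤ (s.card - 1) * (s.card * ∑ a ∈ B, f a) := by
        calc (s.card - 1) * (j * ∑ a ∈ s, f a) = j * ((s.card - 1) * ∑ a ∈ s, f a) := by ring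
          _ ≤ j * (s.card * ∑ a ∈ s.erase x, f a) := Nat.mul_le_mul_left _ h3
          _ = s.card * (j * ∑ a ∈ s.erase x, f a) := by ring
          _ ≤ s.card * ((s.erase x).card * ∑ a ∈ B, f a) := Nat.mul_le_mul_left _ hB
          _ = (s.card - 1) * (s.card * ∑ a ∈ B, f a) := by rw [hcard]; ring
      exact Nat.le_of_mul_le_mul_left key hpos

end MyHelpers

lemma my_gain_sq {ε q n k S E : ℝ} (hε0 : 0 < ε) (hq : 0 ≤ q) (hn : 0 < n) (hk : 0 ≤ k)
    (hE : (1 + 2*ε^5) * q * n * k ≤ E) (hS : E^2 / n ≤ S) :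
    (1 + 3*ε^5) * q^2 * n * k^2 ≤ S := by
  have h0 : 0 ≤ (1 + 2*ε^5) * q * n * k := by positivity
  have h1 : ((1 + 2*ε^5) * q * n * k)^2 ≤ E^2 := by
    exact pow_le_pow_left₀ h0 hE 2
  have hx : 0 < ε^5 := by positivity
  have h2 : (1 + 3*ε^5) ≤ (1 + 2*ε^5)^2 := by nlinarith
  have h3 : (1 + 3*ε^5) * q^2 * n * k^2 * n ≤ ((1 + 2*ε^5) * q * n * k)^2 := by
    have hb : 0 ≤ q^2 * n^2 * k^2 := by positivity
    calc (1 + 3*ε^5) * q^2 * n * k^2 * n = (1 + 3*ε^5) * (q^2 * n^2 * k^2) := by ring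
      _ ≤ (1 + 2*ε^5)^2 * (q^2 * n^2 * k^2) := mul_le_mul_of_nonneg_right h2 hb
      _ = ((1 + 2*ε^5) * q * n * k)^2 := by ring
  have h4 : (1 + 3*ε^5) * q^2 * n * k^2 ≤ E^2 / n := by
    rw [le_div_iff₀ hn]; linarith
  linarith

lemma my_wrap (G : SimpleGraph α) [DecidableRel G.Adj]
    (V T : Finset α) (ε q : ℝ) (hε0 : 0 < ε) (hε1 : ε ≤ 1) (hq0 : 0 ≤ q)
    (hk2 : (2:ℝ) ≤ (T.card : ℝ))
    (h1 : 1 ≤ ε^5 * q^2 * (T.card : ℝ))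
    (hS : (1 + 3*ε^5) * q^2 * (V.card : ℝ) * (T.card : ℝ)^2
        ≤ ∑ w ∈ V, ((T.filter fun u => G.Adj u w).card : ℝ)^2) :
    (1 + 2 * ε ^ 5) * q ^ 2 * (V.card : ℝ) ≤
      ((T.card.choose 2 : ℕ) : ℝ)⁻¹ * ((1 / 2) * ∑ uu ∈ T.offDiag,
        ((V.filter (fun w => G.Adj uu.1 w ∧ G.Adj uu.2 w)).card : ℝ)) := by
  set kr : ℝ := (T.card : ℝ) with hkr
  set S : ℝ := ∑ w ∈ V, ((T.filter fun u => G.Adj u w).card : ℝ)^2 with hSdef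
  set E : ℝ := ∑ w ∈ V, ((T.filter fun u => G.Adj u w).card : ℝ) with hEdef
  have hX : ∑ uu ∈ T.offDiag, ((V.filter (fun w => G.Adj uu.1 w ∧ G.Adj uu.2 w)).card : ℝ)
      = S - E := by
    have := my_codeg_eq G T V
    have hcast : ∑ uu ∈ T.offDiag, ((V.filter (fun w => G.Adj uu.1 w ∧ G.Adj uu.2 w)).card : ℝ)
        = ((∑ uu ∈ T.offDiag, ((V.filter (fun w => G.Adj uu.1 w ∧ G.Adj uu.2 w)).card) : ℕ) : ℝ) := by
      push_cast; rfl
    rw [hcast, this]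
    push_cast
    rw [hSdef, hEdef, ← Finset.sum_sub_distrib]
    refine Finset.sum_congr rfl fun w _ => ?_
    rcases hd : (T.filter fun u => G.Adj u w).card with _ | d
    · simp
    · push_cast [Nat.succ_sub_one]
      ring
  have hEub : E ≤ kr * (V.card : ℝ) := by
    rw [hEdef]
    calc ∑ w ∈ V, ((T.filter fun u => G.Adj u w).card : ℝ)
        ≤ ∑ w ∈ V, kr := by
          refine Finset.sum_le_sum fun w _ => ?_
          exact_mod_cast Nat.cast_le.mpr (Finset.card_filter_le _ _)
      _ = (V.card : ℝ) * kr := by rw [Finset.sum_const]; simp [mul_comm]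
      _ = kr * (V.card : ℝ) := by ring
  have hn0 : (0:ℝ) ≤ (V.card : ℝ) := Nat.cast_nonneg _
  have hkk : (0:ℝ) < kr * (kr - 1) := by nlinarith
  have hch : ((T.card.choose 2 : ℕ) : ℝ) = kr * (kr - 1) / 2 := by
    rw [Nat.cast_choose_two]
  rw [hch, hX]
  have hrw : (kr * (kr - 1) / 2)⁻¹ * ((1/2) * (S - E)) = (S - E) / (kr * (kr - 1)) := by
    field_simp
  rw [hrw, le_div_iff₀ hkk]
  -- (1+2ε⁵) q² n (kr(kr-1)) ≤ S - E
  have hEc : E ≤ ε^5 * q^2 * (V.card : ℝ) * kr^2 := by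
    calc E ≤ kr * (V.card : ℝ) := hEub
      _ = kr * (V.card : ℝ) * 1 := by ring
      _ ≤ kr * (V.card : ℝ) * (ε^5 * q^2 * kr) := by
          refine mul_le_mul_of_nonneg_left h1 ?_
          have : (0:ℝ) ≤ kr := by linarith
          positivity
      _ = ε^5 * q^2 * (V.card : ℝ) * kr^2 := by ring
  have hfinal : (1 + 2*ε^5) * q^2 * (V.card : ℝ) * (kr * (kr - 1))
      ≤ (1 + 2*ε^5) * q^2 * (V.card : ℝ) * kr^2 := by
    have hpos : (0:ℝ) ≤ (1 + 2*ε^5) * q^2 * (V.card : ℝ) := by positivity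
    have : kr * (kr - 1) ≤ kr^2 := by nlinarith
    exact mul_le_mul_of_nonneg_left this hpos
  nlinarith [hS]

set_option maxHeartbeats 1000000 in
/-- in an irregular pair there is a large set with large average common degree. -/
theorem stmt_7 (G : SimpleGraph α) [DecidableRel G.Adj] (U V : Finset α) (hUV : Disjoint U V)
    (hbip : ∀ x y, G.Adj x y → (x ∈ U ∧ y ∈ V) ∨ (x ∈ V ∧ y ∈ U))
    (ε q : ℝ) (hε0 : 0 < ε) (hε : ε ≤ 1 / 1000)
    (hmn : (V.card : ℝ) ≤ (U.card : ℝ))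
    (hn : 2 * ε ^ (-(9 : ℝ)) ≤ (V.card : ℝ))
    (hq : q = (eB G U V : ℝ) / ((U.card : ℝ) * (V.card : ℝ)))
    (hqlb : ε ^ (-(10 : ℝ)) * (V.card : ℝ) ^ (-(1 / 2 : ℝ)) ≤ q)
    (hirr : ∃ U' ⊆ U, ∃ V' ⊆ V, ε * (U.card : ℝ) ≤ (U'.card : ℝ) ∧
      ε * (V.card : ℝ) ≤ (V'.card : ℝ) ∧
      ε * q < |(eB G U' V' : ℝ) / ((U'.card : ℝ) * (V'.card : ℝ)) - q|) :
    ∃ T ⊆ U, ε * (U.card : ℝ) ≤ (T.card : ℝ) ∧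
      (1 + 2 * ε ^ 5) * q ^ 2 * (V.card : ℝ) ≤
        ((T.card.choose 2 : ℕ) : ℝ)⁻¹ * ((1 / 2) * ∑ uu ∈ T.offDiag,
          ((V.filter (fun w => G.Adj uu.1 w ∧ G.Adj uu.2 w)).card : ℝ)) := by
  obtain ⟨U', hU'U, V', hV'V, hU'c, hV'c, hdev⟩ := hirr
  set m : ℝ := (U.card : ℝ) with hm_def
  set n : ℝ := (V.card : ℝ) with hn_def
  set t : ℝ := (U'.card : ℝ) with ht_def
  set v : ℝ := (V'.card : ℝ) with hv_def
  have hε1 : ε ≤ 1 := le_trans hε (by norm_num)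
  have hε54 : ε^5 ≤ ε^4 := pow_le_pow_of_le_one hε0.le hε1 (by norm_num)
  have h9 : ε ^ (-(9:ℝ)) = (ε^9)⁻¹ := by
    rw [Real.rpow_neg hε0.le]
    rw [← Real.rpow_natCast]; norm_num
  have h10 : ε ^ (-(10:ℝ)) = (ε^10)⁻¹ := by
    rw [Real.rpow_neg hε0.le]
    rw [← Real.rpow_natCast]; norm_num
  rw [h9] at hn
  rw [h10] at hqlb
  have hn0 : (0:ℝ) < n := lt_of_lt_of_le (by positivity) hn
  have hm0 : (0:ℝ) < m := lt_of_lt_of_le hn0 hmn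
  have hq0 : (0:ℝ) < q := lt_of_lt_of_le (by positivity) hqlb
  have hninv : (n ^ (-(1/2:ℝ)))^2 = n⁻¹ := by
    rw [← Real.rpow_natCast (n ^ (-(1/2:ℝ))) 2, ← Real.rpow_mul hn0.le]
    norm_num [Real.rpow_neg_one]
  have hq20 : (ε^20)⁻¹ ≤ q^2 * n := by
    have hA : ((ε^10)⁻¹ * (n ^ (-(1/2):ℝ)))^2 ≤ q^2 :=
      pow_le_pow_left₀ (by positivity) hqlb 2
    have hA' : (ε^20)⁻¹ * n⁻¹ ≤ q^2 := by
      have heq : ((ε^10)⁻¹ * (n ^ (-(1/2):ℝ)))^2 = (ε^20)⁻¹ * n⁻¹ := by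
        rw [mul_pow, hninv, inv_pow, ← pow_mul]
      linarith [heq.symm.le, heq.le]
    calc (ε^20)⁻¹ = (ε^20)⁻¹ * n⁻¹ * n := by field_simp
      _ ≤ q^2 * n := mul_le_mul_of_nonneg_right hA' hn0.le
  have hminv9 : (1000:ℝ)^9 ≤ (ε^9)⁻¹ := by
    have h : ε^9 ≤ (1/1000:ℝ)^9 := pow_le_pow_left₀ hε0.le hε 9
    calc (1000:ℝ)^9 = ((1/1000:ℝ)^9)⁻¹ := by norm_num
      _ ≤ (ε^9)⁻¹ := by
        apply inv_anti₀ (by positivity) h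
  have hnbig : (2:ℝ) * 1000^9 ≤ n := by linarith only [hn, hminv9]
  have hmbig : (2:ℝ) * 1000^9 ≤ m := le_trans hnbig hmn
  have hεm2 : (2:ℝ) ≤ ε * m := by
    have hid : ε * (2*(ε^9)⁻¹) = 2 * (ε^8)⁻¹ := by
      field_simp
    have h8 : (1:ℝ) ≤ (ε^8)⁻¹ := by
      rw [le_inv_comm₀ (by norm_num) (by positivity)]
      calc ε^8 ≤ 1 := pow_le_one₀ hε0.le hε1
        _ = 1⁻¹ := by norm_num
    have hc : ε * (2*(ε^9)⁻¹) ≤ ε * n := mul_le_mul_of_nonneg_left hn hε0.le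
    have hc2 : ε * n ≤ ε * m := mul_le_mul_of_nonneg_left hmn hε0.le
    linarith only [hid, h8, hc, hc2]
  have htpos : (0:ℝ) < t := lt_of_lt_of_le (by positivity) hU'c
  have hvpos : (0:ℝ) < v := lt_of_lt_of_le (by positivity) hV'c
  have hVne : V.Nonempty := by
    rw [← Finset.card_pos]
    have : (0:ℝ) < (V.card : ℝ) := by rw [← hn_def]; exact hn0
    exact_mod_cast this
  have key1 : ∀ x : ℝ, ε * m ≤ x → 1 ≤ ε^5 * q^2 * x := by
    intro x hx
    have hxn : ε * n ≤ x := le_trans (mul_le_mul_of_nonneg_left hmn hε0.le) hx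
    have h1 : ε^6 * (q^2 * n) ≤ ε^5 * q^2 * x := by
      calc ε^6 * (q^2*n) = ε^5*q^2*(ε*n) := by ring
        _ ≤ ε^5*q^2*x := mul_le_mul_of_nonneg_left hxn (by positivity)
    have hid : ε^6 * (ε^20)⁻¹ = (ε^14)⁻¹ := by field_simp
    have h14 : (1:ℝ) ≤ (ε^14)⁻¹ := by
      rw [le_inv_comm₀ (by norm_num) (by positivity)]
      calc ε^14 ≤ 1 := pow_le_one₀ hε0.le hε1
        _ = 1⁻¹ := by norm_num
    have h2 : (1:ℝ) ≤ ε^6 * (q^2*n) := by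
      have hmono := mul_le_mul_of_nonneg_left hq20 (show (0:ℝ) ≤ ε^6 by positivity)
      linarith only [hmono, hid, h14]
    linarith
  set Er : ℝ := (eB G U' V : ℝ) with hEr_def
  have hEr0 : (0:ℝ) ≤ Er := Nat.cast_nonneg _
  rcases lt_or_ge ((1 + 2*ε^5) * q * t * n) Er with hI | hInot
  · -- Case I : E' large, T = U'
    refine ⟨U', hU'U, hU'c, my_wrap G V U' ε q hε0 hε1 hq0.le (le_trans hεm2 hU'c)
      (key1 _ hU'c) ?_⟩
    have hE : (1 + 2*ε^5)*q*n*t ≤ Er := by linarith only [hI]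
    exact my_gain_sq hε0 hq0.le hn0 (Nat.cast_nonneg _) hE (my_cs_bound G U' V hVne)
  rcases le_or_gt ((1 - 2*ε^4)*q*t*n) Er with hII | hIII
  · -- Case II : E' middle, T = U', defect Cauchy-Schwarz
    have htn : (0:ℝ) < t * n := by positivity
    have hvlt : V'.card < V.card := by
      rcases lt_or_ge V'.card V.card with h | h
      · exact h
      · exfalso
        have hVeq : V' = V := Finset.eq_of_subset_of_card_le hV'V h
        have hvn : v = n := by rw [hv_def, hn_def, hVeq]
        rw [hVeq, hvn] at hdev
        rw [← hEr_def] at hdev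
        have hqtn : (0:ℝ) ≤ q*t*n := by positivity
        have h54 := mul_le_mul_of_nonneg_right hε54 hqtn
        have hub' : Er/(t*n) ≤ q + 2*ε^4*q := by
          rw [div_le_iff₀ htn]
          linarith only [hInot, h54]
        have hlb' : q - 2*ε^4*q ≤ Er/(t*n) := by
          rw [le_div_iff₀ htn]
          linarith only [hII]
        have habs : |Er / (t*n) - q| ≤ 2*ε^4*q :=
          abs_le.mpr ⟨by linarith only [hlb'], by linarith only [hub']⟩
        have hcontr := lt_of_lt_of_le hdev habs
        have hfac : (0:ℝ) < ε - 2*ε^4 := by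
          have h3 : ε^3 ≤ (1/1000:ℝ)^3 := pow_le_pow_left₀ hε0.le hε 3
          have h4 : ε^3 * ε ≤ (1/1000:ℝ)^3 * ε := mul_le_mul_of_nonneg_right h3 hε0.le
          nlinarith only [h4, hε0]
        have hεq := mul_pos hfac hq0
        nlinarith only [hcontr, hεq]
    have hwpos : (0:ℝ) < n - v := by
      have h1 : (V'.card : ℝ) < (V.card : ℝ) := by exact_mod_cast hvlt
      rw [← hv_def, ← hn_def] at h1
      linarith
    have hwr : (((V \ V').card : ℕ) : ℝ) = n - v := by
      rw [Finset.card_sdiff_of_subset hV'V, Nat.cast_sub (Finset.card_le_card hV'V), ← hv_def, ← hn_def]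
    have hV'ne : V'.Nonempty := by
      rw [← Finset.card_pos]
      have : (0:ℝ) < (V'.card:ℝ) := by rw [← hv_def]; exact hvpos
      exact_mod_cast this
    have hWne : (V \ V').Nonempty := by
      rw [← Finset.card_pos]
      have h2 : (0:ℝ) < (((V \ V').card : ℕ) : ℝ) := by rw [hwr]; linarith
      exact_mod_cast h2
    set E1 : ℝ := (eB G U' V' : ℝ) with hE1_def
    set E2 : ℝ := (eB G U' (V \ V') : ℝ) with hE2_def
    have hsplitN : E1 + E2 = Er := by
      rw [hE1_def, hE2_def, hEr_def]
      exact_mod_cast congrArg (Nat.cast : ℕ → ℝ) (my_eB_right_split G U' hV'V)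
    have hA1 : E1^2 / v ≤ ∑ w ∈ V', ((U'.filter fun u => G.Adj u w).card : ℝ)^2 :=
      my_cs_bound G U' V' hV'ne
    have hA2 : E2^2 / (n - v) ≤ ∑ w ∈ V \ V', ((U'.filter fun u => G.Adj u w).card : ℝ)^2 := by
      have h3 := my_cs_bound G U' (V \ V') hWne
      rwa [hwr] at h3
    have hsum : ∑ w ∈ V \ V', ((U'.filter fun u => G.Adj u w).card : ℝ)^2
        + ∑ w ∈ V', ((U'.filter fun u => G.Adj u w).card : ℝ)^2
        = ∑ w ∈ V, ((U'.filter fun u => G.Adj u w).card : ℝ)^2 :=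
      Finset.sum_sdiff hV'V
    have htv : (0:ℝ) < t * v := by positivity
    have hdev' : ε*q*(t*v) < |E1 - q*(t*v)| := by
      have heq0 : E1/(t*v) - q = (E1 - q*(t*v))/(t*v) := by
        field_simp
      have heq : |E1/(t*v) - q| = |E1 - q*(t*v)| / (t*v) := by
        rw [heq0, abs_div, abs_of_pos htv]
      rw [heq] at hdev
      calc ε*q*(t*v) < (|E1 - q*(t*v)| / (t*v)) * (t*v) := mul_lt_mul_of_pos_right hdev htv
        _ = |E1 - q*(t*v)| := by field_simp
    have hD2 : (ε*q*(t*v))^2 ≤ (E1 - q*t*v)^2 := by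
      have h0 : (0:ℝ) ≤ ε*q*(t*v) := by positivity
      calc (ε*q*(t*v))^2 ≤ |E1 - q*(t*v)|^2 := pow_le_pow_left₀ h0 hdev'.le 2
        _ = (E1 - q*t*v)^2 := by rw [sq_abs]; ring_nf
    have hid1 : E1^2 / v = q^2*t^2*v + 2*q*t*(E1 - q*t*v) + (E1 - q*t*v)^2/v := by
      field_simp
      ring
    have hid2 : q^2*t^2*(n-v) + 2*q*t*((Er - q*t*n) - (E1 - q*t*v)) ≤ E2^2/(n-v) := by
      have hE2eq : E2 = q*t*(n-v) + ((Er - q*t*n) - (E1 - q*t*v)) := by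
        linarith [hsplitN]
      have hexp : E2^2/(n-v) = q^2*t^2*(n-v) + 2*q*t*((Er - q*t*n) - (E1 - q*t*v))
          + ((Er - q*t*n) - (E1 - q*t*v))^2/(n-v) := by
        rw [hE2eq]
        field_simp
        ring
      have hpos : (0:ℝ) ≤ ((Er - q*t*n) - (E1 - q*t*v))^2/(n-v) := by positivity
      linarith
    have hc2 : -(4*ε^4*(q^2*t^2*n)) ≤ 2*q*t*(Er - q*t*n) := by
      have hc : -(2*ε^4*q*t*n) ≤ Er - q*t*n := by linarith only [hII]
      have h := mul_le_mul_of_nonneg_left hc (show (0:ℝ) ≤ 2*q*t by positivity)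
      linarith only [h]
    have hDv : ε^3 * (q^2*t^2*n) ≤ (E1 - q*t*v)^2/v := by
      have hh1 : (ε*q*(t*v))^2 / v = ε^2*q^2*t^2*v := by
        field_simp
      have hh2 : (ε*q*(t*v))^2 / v ≤ (E1 - q*t*v)^2/v := by
        exact div_le_div_of_nonneg_right hD2 hvpos.le
      calc ε^3*(q^2*t^2*n) = ε^2*q^2*t^2*(ε*n) := by ring
        _ ≤ ε^2*q^2*t^2*v := mul_le_mul_of_nonneg_left hV'c (by positivity)
        _ = (ε*q*(t*v))^2 / v := hh1.symm
        _ ≤ (E1 - q*t*v)^2/v := hh2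
    have hkey : 3*ε^5 + 4*ε^4 ≤ ε^3 := by
      have p1 : (0:ℝ) ≤ ε^3 * (1/1000 - ε) := mul_nonneg (pow_nonneg hε0.le 3) (sub_nonneg.2 hε)
      have p2 : (0:ℝ) ≤ ε^4 * (1/1000 - ε) := mul_nonneg (pow_nonneg hε0.le 4) (sub_nonneg.2 hε)
      nlinarith only [p1, p2, pow_nonneg hε0.le 3, pow_nonneg hε0.le 4, pow_nonneg hε0.le 5]
    have hmulkey := mul_le_mul_of_nonneg_right hkey (show (0:ℝ) ≤ q^2*t^2*n by positivity)
    refine ⟨U', hU'U, hU'c, my_wrap G V U' ε q hε0 hε1 hq0.le (le_trans hεm2 hU'c)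
      (key1 _ hU'c) ?_⟩
    have hA1' : q^2*t^2*v + 2*q*t*(E1 - q*t*v) + (E1 - q*t*v)^2/v
        ≤ ∑ w ∈ V', ((U'.filter fun u => G.Adj u w).card : ℝ)^2 := by
      rw [← hid1]; exact hA1
    show (1 + 3*ε^5) * q^2 * n * t^2
        ≤ ∑ w ∈ V, ((U'.filter fun u => G.Adj u w).card : ℝ)^2
    linarith only [hA1', hA2, hsum, hid2, hc2, hDv, hmulkey]
  · -- Case III : E' small
    have hEU : (eB G U V : ℝ) = q*m*n := by
      rw [hq]
      field_simp
    have hsplitU : (eB G U' V : ℝ) + (eB G (U \ U') V : ℝ) = (eB G U V : ℝ) := by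
      exact_mod_cast congrArg (Nat.cast : ℕ → ℝ) (my_eB_left_split G hU'U V)
    have hEC : (eB G (U \ U') V : ℝ) = q*m*n - Er := by
      rw [← hEU]
      rw [hEr_def]
      linarith [hsplitU]
    set kN : ℕ := ⌈ε * m⌉₊ with hkN_def
    have hk_low : ε*m ≤ (kN:ℝ) := Nat.le_ceil _
    have hk_up : (kN:ℝ) ≤ ε*m + 1 := (Nat.ceil_lt_add_one (mul_nonneg hε0.le hm0.le)).le
    have hεmle : ε * m ≤ m / 1000 := by
      have p1 : (0:ℝ) ≤ (1/1000 - ε) * m := mul_nonneg (sub_nonneg.2 hε) hm0.le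
      linarith only [p1]
    have hkm : (kN:ℝ) ≤ m := by linarith only [hk_up, hεmle, hmbig]
    have hkU : kN ≤ U.card := by
      rw [hm_def] at hkm
      exact_mod_cast hkm
    have hk2 : (2:ℝ) ≤ (kN:ℝ) := le_trans hεm2 hk_low
    have hcr : (((U \ U').card : ℕ) : ℝ) = m - t := by
      rw [Finset.card_sdiff_of_subset hU'U, Nat.cast_sub (Finset.card_le_card hU'U), ← hm_def, ← ht_def]
    have hErub : Er ≤ (1-2*ε^4)*q*t*n := hIII.le
    rcases le_or_gt kN (U \ U').card with hab | hab
    · -- IIIa : complement is large, take top kN of it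
      obtain ⟨X, hXsub, hXcard, hXsum⟩ :=
        my_sel (fun a => (V.filter (G.Adj a)).card) (U \ U') kN hab
      have hXsum0 : kN * eB G (U \ U') V ≤ (U \ U').card * eB G X V := hXsum
      have hXsum' : (kN:ℝ) * (eB G (U \ U') V : ℝ) ≤ (m - t) * (eB G X V : ℝ) := by
        rw [← hcr]
        exact_mod_cast hXsum0
      have hXU : X ⊆ U := hXsub.trans Finset.sdiff_subset
      have hXc : ε * m ≤ (X.card : ℝ) := by rw [hXcard]; exact hk_low
      have hmt0 : (0:ℝ) < m - t := by
        have h5 : (kN:ℝ) ≤ m - t := by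
          rw [← hcr]
          exact_mod_cast hab
        linarith
      have hstep1 : (1+2*ε^5)*q*n*(m - t) ≤ q*m*n - Er := by
        have h1 : ε*(m - t) ≤ t := by
          have p1 : (0:ℝ) ≤ ε * t := mul_nonneg hε0.le htpos.le
          linarith only [p1, hU'c]
        have h2 := mul_le_mul_of_nonneg_left h1 (show (0:ℝ) ≤ 2*ε^4*q*n from mul_nonneg (mul_nonneg (mul_nonneg (by norm_num) (pow_nonneg hε0.le 4)) hq0.le) hn0.le)
        linarith only [h2, hErub]
      have hchain : ((1+2*ε^5)*q*n*(kN:ℝ)) * (m - t) ≤ ((eB G X V : ℝ)) * (m - t) := by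
        calc ((1+2*ε^5)*q*n*(kN:ℝ)) * (m - t) = (kN:ℝ) * ((1+2*ε^5)*q*n*(m-t)) := by ring
          _ ≤ (kN:ℝ) * (q*m*n - Er) := mul_le_mul_of_nonneg_left hstep1 (Nat.cast_nonneg _)
          _ = (kN:ℝ) * (eB G (U \ U') V : ℝ) := by rw [hEC]
          _ ≤ (m-t) * (eB G X V:ℝ) := hXsum'
          _ = ((eB G X V:ℝ)) * (m-t) := by ring
      have hEX : (1+2*ε^5)*q*n*(kN:ℝ) ≤ (eB G X V : ℝ) := le_of_mul_le_mul_right hchain hmt0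
      refine ⟨X, hXU, hXc, my_wrap G V X ε q hε0 hε1 hq0.le
        (by rw [hXcard]; exact hk2) (by rw [hXcard]; exact key1 _ hk_low) ?_⟩
      refine my_gain_sq hε0 hq0.le hn0 (Nat.cast_nonneg _) ?_ (my_cs_bound G X V hVne)
      rw [hXcard]
      exact hEX
    · -- IIIb : complement small, take complement plus top of U'
      have hcc := Finset.card_sdiff_add_card_eq_card hU'U
      have hjle : kN - (U \ U').card ≤ U'.card := by omega
      obtain ⟨X, hXsub, hXcard, hXsum⟩ :=
        my_sel (fun a => (V.filter (G.Adj a)).card) U' (kN - (U \ U').card) hjle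
      have hXsum0 : (kN - (U \ U').card) * eB G U' V ≤ U'.card * eB G X V := hXsum
      set T : Finset α := (U \ U') ∪ X with hT_def
      have hdisj : Disjoint (U \ U') X :=
        Finset.disjoint_of_subset_right hXsub Finset.sdiff_disjoint
      have hTU : T ⊆ U := Finset.union_subset Finset.sdiff_subset (hXsub.trans hU'U)
      have hTcard : T.card = kN := by
        rw [hT_def, Finset.card_union_of_disjoint hdisj, hXcard]
        omega
      have hjr : ((kN - (U \ U').card : ℕ) : ℝ) = (kN:ℝ) - (m - t) := by
        rw [Nat.cast_sub hab.le, hcr]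
      have hXsum' : ((kN:ℝ) - (m - t)) * Er ≤ t * (eB G X V : ℝ) := by
        rw [← hjr, hEr_def, ht_def]
        exact_mod_cast hXsum0
      have hET : (eB G T V : ℝ) = (q*m*n - Er) + (eB G X V : ℝ) := by
        have h6 := congrArg (Nat.cast : ℕ → ℝ) (my_eB_union G hdisj V)
        push_cast at h6
        rw [hT_def]
        rw [h6, hEC]
      have haux : ε*m + ε^2*m + 2 ≤ m := by
        have p1 : (0:ℝ) ≤ (1/1000 - ε) * m := mul_nonneg (sub_nonneg.2 hε) hm0.le
        have p2 : (0:ℝ) ≤ (1/1000 - ε) * (ε*m) :=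
          mul_nonneg (sub_nonneg.2 hε) (mul_nonneg hε0.le hm0.le)
        linarith only [p1, p2, hmbig]
      have hstep : (2*ε^4+2*ε^5)*(ε*m+1) ≤ 2*ε^4*m := by
        have h := mul_le_mul_of_nonneg_left haux (show (0:ℝ) ≤ 2*ε^4 by positivity)
        linarith only [h, hε54]
      have hscalar : (1+2*ε^5)*(kN:ℝ) ≤ m - (1-2*ε^4)*(m - (kN:ℝ)) := by
        have h1 : (2*ε^4+2*ε^5)*(kN:ℝ) ≤ (2*ε^4+2*ε^5)*(ε*m+1) :=
          mul_le_mul_of_nonneg_left hk_up (by positivity)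
        linarith only [h1, hstep]
      have htmj : (0:ℝ) ≤ t - ((kN:ℝ) - (m - t)) := by
        have h7 : ((kN - (U \ U').card : ℕ) : ℝ) ≤ (U'.card : ℝ) := by exact_mod_cast hjle
        rw [hjr, ← ht_def] at h7
        linarith
      have h4 : (t - ((kN:ℝ) - (m - t))) * Er ≤ (t - ((kN:ℝ) - (m-t))) * ((1-2*ε^4)*q*t*n) :=
        mul_le_mul_of_nonneg_left hErub htmj
      have h6 := mul_le_mul_of_nonneg_right hscalar (show (0:ℝ) ≤ q*n*t from mul_nonneg (mul_nonneg hq0.le hn0.le) htpos.le)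
      have hmainT : ((1+2*ε^5)*q*n*(kN:ℝ)) * t ≤ ((eB G T V : ℝ)) * t := by
        have hexp : ((eB G T V:ℝ)) * t = t*(q*m*n) - t*Er + t*(eB G X V:ℝ) := by
          rw [hET]; ring
        linarith only [hXsum', h4, h6, hexp]
      have hET' : (1+2*ε^5)*q*n*(kN:ℝ) ≤ (eB G T V : ℝ) := le_of_mul_le_mul_right hmainT htpos
      refine ⟨T, hTU, by rw [hTcard]; exact hk_low, my_wrap G V T ε q hε0 hε1 hq0.le
        (by rw [hTcard]; exact hk2) (by rw [hTcard]; exact key1 _ hk_low) ?_⟩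
      refine my_gain_sq hε0 hq0.le hn0 (Nat.cast_nonneg _) ?_ (my_cs_bound G T V hVne)
      rw [hTcard]
      exact hET'
end

section
/- Let 0 < p ≤ 1/10 be real, q ≥ 1 an integer, and b₁ ≥ … ≥ b_q non-negative integers. Let P := ⌊log₂(1/p)⌋ and C := max_{1 ≤ i ≤ q}(b_i + i). Let A := [0,P]^q ∖ {0} be the set of nonzero q-dimensional vectors with integer entries between 0 and P. Then ∑_{α ∈ A} 2^{α₁+…+α_q} / (max_{i : α_i ≠ 0} 2^{2α_i} p^{b_i}) ≤ (50q)^q · p^{1-C}. -/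
open Finset

private noncomputable def wfun (q P : ℕ) (m j : Fin q) (x : ℕ) : ℝ :=
  if j < m then 2 ^ x * (2⁻¹ : ℝ) ^ P else (2⁻¹ : ℝ) ^ x

private lemma wfun_nonneg (q P : ℕ) (m j : Fin q) (x : ℕ) : 0 ≤ wfun q P m j x := by
  unfold wfun; split <;> positivity

private lemma sum_wfun_le (q P : ℕ) (m j : Fin q) :
    ∑ x ∈ Finset.range (P + 1), wfun q P m j x ≤ 2 := by
  unfold wfun
  split
  · rw [← Finset.sum_mul, geom_sum_eq (by norm_num)]
    have h2 : (0:ℝ) < 2 ^ P := by positivity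
    rw [inv_pow, ← div_eq_mul_inv, div_le_iff₀ h2]
    rw [show ((2:ℝ) - 1) = 1 by norm_num, div_one, pow_succ]
    nlinarith
  · rw [geom_sum_eq (by norm_num), div_le_iff_of_neg (by norm_num)]
    have : (0:ℝ) ≤ (2⁻¹:ℝ) ^ (P+1) := by positivity
    nlinarith

private lemma card_filter_lt_fin (n : ℕ) (m : Fin n) :
    (univ.filter (fun j => j < m)).card = m.1 := by
  rw [show univ.filter (fun j => j < m) = Finset.Iio m by ext j; simp]
  exact Fin.card_Iio m

/-- the optimisation lemma (sum over nonzero integer vectors). The maximum in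
the denominator, over indices `i` with `a i ≠ 0`, is expressed as `sSup` of the (finite,
nonempty) set of values. -/
theorem stmt_13 (p : ℝ) (hp0 : 0 < p) (hp : p ≤ 1 / 10) (q : ℕ) (hq : 1 ≤ q)
    (b : Fin q → ℕ) (hb : ∀ i j : Fin q, i ≤ j → b j ≤ b i) :
    ∑ a ∈ (Fintype.piFinset (fun _ : Fin q =>
        Finset.range (⌊Real.logb 2 (1 / p)⌋₊ + 1))).filter (fun a => a ≠ 0),
      (2 : ℝ) ^ (∑ i, a i) /
        sSup {r : ℝ | ∃ i, a i ≠ 0 ∧ r = (2 : ℝ) ^ (2 * a i) * p ^ (b i)} ≤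
      (50 * (q : ℝ)) ^ q *
        p ^ ((1 : ℝ) - ((Finset.univ.sup (fun i : Fin q => b i + i.1 + 1) : ℕ) : ℝ)) := by
  have hp1 : p ≤ 1 := hp.trans (by norm_num)
  set P : ℕ := ⌊Real.logb 2 (1 / p)⌋₊ with hPdef
  set C : ℕ := Finset.univ.sup (fun i : Fin q => b i + i.1 + 1) with hCdef
  -- 2^P * p ≤ 1
  have h2P : (2:ℝ) ^ P * p ≤ 1 := by
    have h10 : (1:ℝ) ≤ 1 / p := by rw [le_div_iff₀ hp0]; linarith
    have h1 : (P : ℝ) ≤ Real.logb 2 (1/p) :=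
      Nat.floor_le (Real.logb_nonneg (by norm_num) h10)
    have h2 : (2:ℝ) ^ (P:ℝ) ≤ (2:ℝ) ^ Real.logb 2 (1/p) :=
      Real.rpow_le_rpow_of_exponent_le one_le_two h1
    rw [Real.rpow_logb (by norm_num) (by norm_num) (by positivity), Real.rpow_natCast] at h2
    calc (2:ℝ) ^ P * p ≤ (1/p) * p := by nlinarith
      _ = 1 := by field_simp
  have hrp : (0:ℝ) < p ^ ((1:ℝ) - (C:ℝ)) := Real.rpow_pos_of_pos hp0 _
  -- per-term bound
  have hterm : ∀ a ∈ (Fintype.piFinset (fun _ : Fin q =>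
        Finset.range (P + 1))).filter (fun a => a ≠ 0),
      (2 : ℝ) ^ (∑ i, a i) /
        sSup {r : ℝ | ∃ i, a i ≠ 0 ∧ r = (2 : ℝ) ^ (2 * a i) * p ^ (b i)} ≤
      p ^ ((1:ℝ) - (C:ℝ)) * ∑ m : Fin q, ∏ j, wfun q P m j (a j) := by
    intro a ha
    rw [mem_filter] at ha
    obtain ⟨hapi, hane⟩ := ha
    obtain ⟨i₀, hi₀⟩ := Function.ne_iff.mp hane
    have hi₀' : a i₀ ≠ 0 := by simpa using hi₀
    have hsne : (univ.filter (fun i => a i ≠ 0)).Nonempty := ⟨i₀, by simp [hi₀']⟩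
    set m : Fin q := (univ.filter (fun i => a i ≠ 0)).max' hsne with hmdef
    have ham : a m ≠ 0 := by
      have := Finset.max'_mem _ hsne
      rw [mem_filter] at this; exact this.2
    have hmax : ∀ j, m < j → a j = 0 := by
      intro j hj
      by_contra h
      exact absurd (Finset.le_max' _ j (by simp [h])) (not_le.mpr hj)
    have hD : (0:ℝ) < 2 ^ (2 * a m) * p ^ (b m) := by positivity
    have hDle : (2:ℝ) ^ (2 * a m) * p ^ (b m) ≤
        sSup {r : ℝ | ∃ i, a i ≠ 0 ∧ r = (2 : ℝ) ^ (2 * a i) * p ^ (b i)} := by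
      apply le_csSup
      · apply Set.Finite.bddAbove
        apply Set.Finite.subset (Set.finite_range (fun i : Fin q => (2:ℝ) ^ (2 * a i) * p ^ (b i)))
        rintro r ⟨i, -, rfl⟩
        exact ⟨i, rfl⟩
      · exact ⟨m, ham, rfl⟩
    set S : ℕ := ∑ j ∈ univ.filter (fun j => j < m), a j with hSdef
    have hsum2 : ∑ j ∈ univ.filter (fun j => ¬ j < m), a j = a m := by
      apply Finset.sum_eq_single_of_mem
      · simp
      · intro j hj hne
        rw [mem_filter] at hj
        exact hmax j (lt_of_le_of_ne (not_lt.mp hj.2) (Ne.symm hne))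
    have hsum : ∑ i, a i = S + a m := by
      rw [← Finset.sum_filter_add_sum_filter_not univ (fun j => j < m) a, hsum2]
    have hprodw : ∏ j, wfun q P m j (a j)
        = 2 ^ S * (2⁻¹:ℝ) ^ (P * m.1) * (2⁻¹:ℝ) ^ (a m) := by
      rw [← Finset.prod_filter_mul_prod_filter_not univ (fun j => j < m)]
      have e1 : ∏ j ∈ univ.filter (fun j => j < m), wfun q P m j (a j)
          = 2 ^ S * (2⁻¹:ℝ) ^ (P * m.1) := by
        calc ∏ j ∈ univ.filter (fun j => j < m), wfun q P m j (a j)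
            = ∏ j ∈ univ.filter (fun j => j < m), (2:ℝ) ^ (a j) * (2⁻¹:ℝ) ^ P := by
              refine Finset.prod_congr rfl fun j hj => ?_
              rw [mem_filter] at hj
              unfold wfun
              rw [if_pos hj.2]
          _ = (∏ j ∈ univ.filter (fun j => j < m), (2:ℝ) ^ (a j)) *
              ∏ _j ∈ univ.filter (fun j => j < m), (2⁻¹:ℝ) ^ P := Finset.prod_mul_distrib
          _ = 2 ^ S * (2⁻¹:ℝ) ^ (P * m.1) := by
              rw [Finset.prod_pow_eq_pow_sum, Finset.prod_const, card_filter_lt_fin, ← pow_mul]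
      have e2 : ∏ j ∈ univ.filter (fun j => ¬ j < m), wfun q P m j (a j)
          = (2⁻¹:ℝ) ^ (a m) := by
        calc ∏ j ∈ univ.filter (fun j => ¬ j < m), wfun q P m j (a j)
            = ∏ j ∈ univ.filter (fun j => ¬ j < m), (2⁻¹:ℝ) ^ (a j) := by
              refine Finset.prod_congr rfl fun j hj => ?_
              rw [mem_filter] at hj
              unfold wfun
              rw [if_neg hj.2]
          _ = (2⁻¹:ℝ) ^ ∑ j ∈ univ.filter (fun j => ¬ j < m), a j :=
              Finset.prod_pow_eq_pow_sum _ _ _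
          _ = (2⁻¹:ℝ) ^ (a m) := by rw [hsum2]
      rw [e1, e2]
    -- core scalar inequality
    have hkC : b m + m.1 + 1 ≤ C := Finset.le_sup (f := fun i : Fin q => b i + i.1 + 1) (mem_univ m)
    have hcore : ((p:ℝ) ^ (b m))⁻¹ ≤ p ^ ((1:ℝ) - (C:ℝ)) * (2⁻¹:ℝ) ^ (P * m.1) := by
      have h1 : ((p:ℝ) ^ (b m + m.1))⁻¹ ≤ p ^ ((1:ℝ) - (C:ℝ)) := by
        have he : ((p:ℝ) ^ (b m + m.1))⁻¹ = p ^ (-((b m + m.1 : ℕ) : ℝ)) := by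
          rw [← Real.rpow_natCast p, ← Real.rpow_neg hp0.le]
        rw [he]
        apply Real.rpow_le_rpow_of_exponent_ge hp0 hp1
        have hc : ((b m + m.1 + 1 : ℕ) : ℝ) ≤ (C:ℝ) := by exact_mod_cast hkC
        push_cast at hc ⊢
        linarith
      have h2 : p ^ m.1 * (2:ℝ) ^ (P * m.1) ≤ 1 := by
        calc p ^ m.1 * (2:ℝ) ^ (P * m.1) = (p * 2 ^ P) ^ m.1 := by rw [mul_pow, pow_mul]
          _ ≤ 1 ^ m.1 := pow_le_pow_left₀ (by positivity) (by linarith) m.1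
          _ = 1 := one_pow _
      have h3 : (p:ℝ) ^ (b m + m.1) * 2 ^ (P * m.1) ≤ p ^ (b m) := by
        calc (p:ℝ) ^ (b m + m.1) * 2 ^ (P * m.1)
            = p ^ (b m) * (p ^ m.1 * 2 ^ (P * m.1)) := by rw [pow_add]; ring
          _ ≤ p ^ (b m) * 1 := mul_le_mul_of_nonneg_left h2 (by positivity)
          _ = p ^ (b m) := mul_one _
      calc ((p:ℝ) ^ (b m))⁻¹ ≤ ((p:ℝ) ^ (b m + m.1) * 2 ^ (P * m.1))⁻¹ := by
            apply inv_anti₀ (by positivity) h3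
        _ = ((p:ℝ) ^ (b m + m.1))⁻¹ * (2⁻¹:ℝ) ^ (P * m.1) := by rw [mul_inv, inv_pow]
        _ ≤ p ^ ((1:ℝ) - (C:ℝ)) * (2⁻¹:ℝ) ^ (P * m.1) :=
            mul_le_mul_of_nonneg_right h1 (by positivity)
    calc (2 : ℝ) ^ (∑ i, a i) /
        sSup {r : ℝ | ∃ i, a i ≠ 0 ∧ r = (2 : ℝ) ^ (2 * a i) * p ^ (b i)}
        ≤ (2 : ℝ) ^ (∑ i, a i) / ((2:ℝ) ^ (2 * a m) * p ^ (b m)) :=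
          div_le_div_of_nonneg_left (by positivity) hD hDle
      _ = (2 ^ S * (2⁻¹:ℝ) ^ (a m)) * ((p:ℝ) ^ (b m))⁻¹ := by
          rw [hsum]; field_simp; rw [one_div, inv_pow, pow_mul]; field_simp; rw [← pow_mul]; ring
      _ ≤ (2 ^ S * (2⁻¹:ℝ) ^ (a m)) * (p ^ ((1:ℝ) - (C:ℝ)) * (2⁻¹:ℝ) ^ (P * m.1)) :=
          mul_le_mul_of_nonneg_left hcore (by positivity)
      _ = p ^ ((1:ℝ) - (C:ℝ)) * ∏ j, wfun q P m j (a j) := by rw [hprodw]; ring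
      _ ≤ p ^ ((1:ℝ) - (C:ℝ)) * ∑ m' : Fin q, ∏ j, wfun q P m' j (a j) := by
          apply mul_le_mul_of_nonneg_left _ hrp.le
          exact Finset.single_le_sum (f := fun m' => ∏ j, wfun q P m' j (a j))
            (fun m' _ => Finset.prod_nonneg (fun j _ => wfun_nonneg q P m' j (a j))) (mem_univ m)
  -- sum it all
  calc ∑ a ∈ (Fintype.piFinset (fun _ : Fin q =>
        Finset.range (P + 1))).filter (fun a => a ≠ 0),
      (2 : ℝ) ^ (∑ i, a i) /
        sSup {r : ℝ | ∃ i, a i ≠ 0 ∧ r = (2 : ℝ) ^ (2 * a i) * p ^ (b i)}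
      ≤ ∑ a ∈ (Fintype.piFinset (fun _ : Fin q =>
        Finset.range (P + 1))).filter (fun a => a ≠ 0),
        p ^ ((1:ℝ) - (C:ℝ)) * ∑ m : Fin q, ∏ j, wfun q P m j (a j) :=
        Finset.sum_le_sum hterm
    _ ≤ ∑ a ∈ Fintype.piFinset (fun _ : Fin q => Finset.range (P + 1)),
        p ^ ((1:ℝ) - (C:ℝ)) * ∑ m : Fin q, ∏ j, wfun q P m j (a j) := by
        apply Finset.sum_le_sum_of_subset_of_nonneg (Finset.filter_subset _ _)
        intro a _ _
        apply mul_nonneg hrp.le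
        exact Finset.sum_nonneg fun m _ =>
          Finset.prod_nonneg fun j _ => wfun_nonneg q P m j (a j)
    _ = p ^ ((1:ℝ) - (C:ℝ)) * ∑ m : Fin q,
          ∑ a ∈ Fintype.piFinset (fun _ : Fin q => Finset.range (P + 1)),
            ∏ j, wfun q P m j (a j) := by
        rw [← Finset.mul_sum, Finset.sum_comm]
    _ ≤ p ^ ((1:ℝ) - (C:ℝ)) * ((q:ℝ) * 2 ^ q) := by
        apply mul_le_mul_of_nonneg_left _ hrp.le
        calc ∑ m : Fin q, ∑ a ∈ Fintype.piFinset (fun _ : Fin q => Finset.range (P + 1)),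
              ∏ j, wfun q P m j (a j)
            = ∑ m : Fin q, ∏ j : Fin q, ∑ x ∈ Finset.range (P + 1), wfun q P m j x := by
              refine Finset.sum_congr rfl fun m _ => ?_
              rw [Finset.prod_univ_sum]
          _ ≤ ∑ m : Fin q, (2:ℝ) ^ q := by
              refine Finset.sum_le_sum fun m _ => ?_
              calc ∏ j : Fin q, ∑ x ∈ Finset.range (P + 1), wfun q P m j x
                  ≤ ∏ j : Fin q, (2:ℝ) := Finset.prod_le_prod
                    (fun j _ => Finset.sum_nonneg fun x _ => wfun_nonneg q P m j x)
                    (fun j _ => sum_wfun_le q P m j)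
                _ = (2:ℝ) ^ q := by simp [Finset.prod_const]
          _ = (q:ℝ) * 2 ^ q := by simp [mul_comm]
    _ ≤ (50 * (q : ℝ)) ^ q * p ^ ((1:ℝ) - (C:ℝ)) := by
        rw [mul_comm]
        apply mul_le_mul_of_nonneg_right _ hrp.le
        have hq1 : (1:ℝ) ≤ (q:ℝ) := by exact_mod_cast hq
        calc (q:ℝ) * 2 ^ q ≤ (q:ℝ) ^ q * 50 ^ q := by
              apply mul_le_mul
              · calc (q:ℝ) = (q:ℝ) ^ 1 := (pow_one _).symm
                  _ ≤ (q:ℝ) ^ q := pow_le_pow_right₀ hq1 hq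
              · exact pow_le_pow_left₀ (by norm_num) (by norm_num) q
              · positivity
              · positivity
          _ = (50 * (q:ℝ)) ^ q := by rw [← mul_pow]; ring
end

section
/- Suppose Γ is a graph, (V,W) is a pair of disjoint vertex sets which is (p, c'·p²·√(|V||W|))-bijumbled in Γ with c' ≤ 1, and G ⊆ Γ has (V,W) (ε,d,p)-regular as a pair in G. If additionally the number of vertices w ∈ W with deg_Γ(w;V) > 2p|V| is at most 2(c'p)²|W|, then the quantity a' := binom(|V|,2)^{-1} ∑_{w ∈ W} binom(deg_G(w;V), 2) satisfies a' ≤ 5·p²·|W|. -/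
open Finset
open scoped Classical

variable {α : Type*} [Fintype α] [DecidableEq α]

set_option maxHeartbeats 1000000 in
/-- upper bound on the average common degree in a regular subpair
of a bijumbled pair. -/
theorem stmt_16 (Γ G : SimpleGraph α) [DecidableRel Γ.Adj] [DecidableRel G.Adj] (hGΓ : G ≤ Γ)
    (V W : Finset α) (hVW : Disjoint V W) (ε d c' p : ℝ) (hc'0 : 0 < c') (hc' : c' ≤ 1)
    (hp : 0 < p)
    (hj : Bijumbled Γ p (c' * p ^ 2 * Real.sqrt ((V.card : ℝ) * (W.card : ℝ))) V W)
    (hreg : RegularTriple G ε d p V W)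
    (hbig : ((W.filter (fun w =>
        2 * p * (V.card : ℝ) < ((V.filter (Γ.Adj w)).card : ℝ))).card : ℝ) ≤
      2 * (c' * p) ^ 2 * (W.card : ℝ)) :
    ((V.card.choose 2 : ℕ) : ℝ)⁻¹ * ∑ w ∈ W, (((V.filter (G.Adj w)).card.choose 2 : ℕ) : ℝ) ≤
      5 * p ^ 2 * (W.card : ℝ) := by
  classical
  set n := V.card with hn
  set m := W.card with hm
  rcases lt_or_ge n 2 with h2 | h2
  · have h0 : n.choose 2 = 0 := Nat.choose_eq_zero_of_lt h2
    rw [h0]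
    simp only [Nat.cast_zero, inv_zero, zero_mul]
    positivity
  · have hnR : (2:ℝ) ≤ (n:ℝ) := by exact_mod_cast h2
    have hC : (0:ℝ) < ((n.choose 2 : ℕ) : ℝ) := by
      exact_mod_cast Nat.choose_pos h2
    set B := W.filter (fun w => 2 * p * (n:ℝ) < ((V.filter (Γ.Adj w)).card : ℝ)) with hB
    have hBsub : B ⊆ W := Finset.filter_subset _ _
    -- symmetry of edge count
    have hsym : eB Γ V B = ∑ b ∈ B, (V.filter (Γ.Adj b)).card := by
      unfold eB
      simp only [Finset.card_filter]
      rw [Finset.sum_comm]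
      exact Finset.sum_congr rfl fun b _ => Finset.sum_congr rfl fun a _ => by
        simp [SimpleGraph.adj_comm]
    have hm0 : (0:ℝ) ≤ (m:ℝ) := Nat.cast_nonneg m
    -- |B| ≤ c'^2 p^2 m
    have hBcard : (B.card : ℝ) ≤ c'^2 * p^2 * m := by
      rcases Finset.eq_empty_or_nonempty B with hBe | hBne
      · rw [hBe]; simp; positivity
      · have hb0 : (0:ℝ) < (B.card:ℝ) := by exact_mod_cast Finset.card_pos.mpr hBne
        have hlow : 2 * p * (n:ℝ) * B.card ≤ (eB Γ V B : ℝ) := by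
          rw [hsym]
          push_cast
          calc 2 * p * (n:ℝ) * B.card = ∑ _w ∈ B, 2 * p * (n:ℝ) := by
                rw [Finset.sum_const]; push_cast; ring
            _ ≤ ∑ w ∈ B, ((V.filter (Γ.Adj w)).card : ℝ) := by
                apply Finset.sum_le_sum
                intro w hw
                exact le_of_lt (Finset.mem_filter.mp hw).2
        have hup := hj V (Finset.Subset.refl V) B hBsub
        have hsq : Real.sqrt ((n:ℝ) * m) * Real.sqrt ((n:ℝ) * B.card)
            = (n:ℝ) * Real.sqrt ((m:ℝ) * B.card) := by
          rw [← Real.sqrt_mul (by positivity)]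
          have : (n:ℝ) * m * ((n:ℝ) * B.card) = (n:ℝ)^2 * ((m:ℝ) * B.card) := by ring
          rw [this, Real.sqrt_mul (by positivity), Real.sqrt_sq (by positivity)]
        have habs := abs_le.mp hup
        have hup2 : (eB Γ V B : ℝ) - p * n * B.card ≤
            c' * p ^ 2 * (n:ℝ) * Real.sqrt ((m:ℝ) * B.card) := by
          have := habs.2
          rw [mul_assoc (c' * p ^ 2), hsq] at this
          linarith [this]
        have hkey : p * (n:ℝ) * B.card ≤ p * (n:ℝ) * (c' * p * Real.sqrt ((m:ℝ) * B.card)) := by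
          nlinarith [hlow, hup2]
        have h1 : (B.card:ℝ) ≤ c' * p * Real.sqrt ((m:ℝ) * B.card) := by
          have hpn : (0:ℝ) < p * (n:ℝ) := by positivity
          exact le_of_mul_le_mul_left (by linarith [hkey]) hpn
        have hsplit : Real.sqrt ((m:ℝ) * B.card) = Real.sqrt m * Real.sqrt B.card :=
          Real.sqrt_mul hm0 _
        have hmul : Real.sqrt (B.card:ℝ) * Real.sqrt (B.card:ℝ) = (B.card:ℝ) :=
          Real.mul_self_sqrt hb0.le
        have hsb0 : (0:ℝ) < Real.sqrt (B.card:ℝ) := Real.sqrt_pos.mpr hb0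
        have hsb : Real.sqrt (B.card:ℝ) ≤ c' * p * Real.sqrt m := by
          rw [hsplit] at h1
          nlinarith [h1, hmul, hsb0]
        have hmm : Real.sqrt (m:ℝ) * Real.sqrt (m:ℝ) = (m:ℝ) := Real.mul_self_sqrt hm0
        have h2 : (B.card:ℝ) ≤ (c' * p * Real.sqrt m) * (c' * p * Real.sqrt m) := by
          rw [← hmul]
          exact mul_le_mul hsb hsb hsb0.le (by positivity)
        have h3 : (c' * p * Real.sqrt m) * (c' * p * Real.sqrt m) = c'^2 * p^2 * m := by
          rw [show (c' * p * Real.sqrt (m:ℝ)) * (c' * p * Real.sqrt (m:ℝ))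
              = c'^2 * p^2 * (Real.sqrt (m:ℝ) * Real.sqrt (m:ℝ)) by ring, hmm]
        linarith
    -- per-vertex bounds
    have hdegn : ∀ w, (V.filter (G.Adj w)).card ≤ n :=
      fun w => Finset.card_le_card (Finset.filter_subset _ _)
    have hCval : ((n.choose 2 : ℕ) : ℝ) = (n:ℝ) * ((n:ℝ) - 1) / 2 := Nat.cast_choose_two (K := ℝ) n
    have hbigb : ∀ w ∈ B, (((V.filter (G.Adj w)).card.choose 2 : ℕ) : ℝ) ≤ ((n.choose 2:ℕ):ℝ) := by
      intro w _
      exact_mod_cast Nat.choose_le_choose 2 (hdegn w)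
    have hsmall : ∀ w ∈ W \ B,
        (((V.filter (G.Adj w)).card.choose 2 : ℕ) : ℝ) ≤ 4 * p^2 * ((n.choose 2:ℕ):ℝ) := by
      intro w hw
      have hwW := (Finset.mem_sdiff.mp hw).1
      have hwB := (Finset.mem_sdiff.mp hw).2
      have hdΓ : ((V.filter (Γ.Adj w)).card : ℝ) ≤ 2 * p * n := by
        by_contra hcon
        exact hwB (Finset.mem_filter.mpr ⟨hwW, lt_of_not_ge hcon⟩)
      have hsubGT : V.filter (G.Adj w) ⊆ V.filter (Γ.Adj w) :=
        Finset.monotone_filter_right V (fun v _ h => hGΓ h)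
      set dd := (V.filter (G.Adj w)).card with hdd
      have hdG : (dd:ℝ) ≤ 2 * p * n := le_trans (by exact_mod_cast Finset.card_le_card hsubGT) hdΓ
      have hdn : dd ≤ n := hdegn w
      have hddval : ((dd.choose 2 : ℕ) : ℝ) = (dd:ℝ) * ((dd:ℝ) - 1) / 2 := Nat.cast_choose_two (K := ℝ) dd
      rcases Nat.eq_zero_or_pos dd with h0 | h1
      · rw [h0]; simp; positivity
      · have hd1 : (1:ℝ) ≤ (dd:ℝ) := by exact_mod_cast h1
        rcases le_or_gt p (1/2) with hph | hph
        · rw [hddval, hCval]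
          nlinarith [hd1, hdG, hnR, hp, hph,
            mul_nonneg (by linarith : (0:ℝ) ≤ 2*p*(n:ℝ) - dd) (by linarith : (0:ℝ) ≤ 2*p*(n:ℝ) - 1 + dd),
            mul_nonneg (by positivity : (0:ℝ) ≤ 2*p*(n:ℝ)) (by linarith : (0:ℝ) ≤ 1 - 2*p)]
        · have hcc : (((dd.choose 2:ℕ)):ℝ) ≤ ((n.choose 2:ℕ):ℝ) := by
            exact_mod_cast Nat.choose_le_choose 2 hdn
          have h4 : (1:ℝ) ≤ 4 * p^2 := by nlinarith
          nlinarith [hcc, hC.le, h4]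
    -- sum up
    have hsum : ∑ w ∈ W, (((V.filter (G.Adj w)).card.choose 2 : ℕ) : ℝ) ≤
        4 * p^2 * ((n.choose 2:ℕ):ℝ) * m + ((n.choose 2:ℕ):ℝ) * (c'^2 * p^2 * m) := by
      rw [← Finset.sum_sdiff hBsub]
      have t1 : ∑ w ∈ W \ B, (((V.filter (G.Adj w)).card.choose 2 : ℕ) : ℝ) ≤
          ((W \ B).card : ℝ) * (4 * p^2 * ((n.choose 2:ℕ):ℝ)) := by
        have := Finset.sum_le_card_nsmul (W \ B) _ _ hsmall
        simpa [nsmul_eq_mul] using this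
      have t2 : ∑ w ∈ B, (((V.filter (G.Adj w)).card.choose 2 : ℕ) : ℝ) ≤
          (B.card : ℝ) * ((n.choose 2:ℕ):ℝ) := by
        have := Finset.sum_le_card_nsmul B _ _ hbigb
        simpa [nsmul_eq_mul] using this
      have hWB : ((W \ B).card : ℝ) ≤ (m:ℝ) := by
        exact_mod_cast Finset.card_le_card (Finset.sdiff_subset)
      have u1 : ((W \ B).card:ℝ) * (4 * p^2 * ((n.choose 2:ℕ):ℝ)) ≤
          (m:ℝ) * (4 * p^2 * ((n.choose 2:ℕ):ℝ)) :=
        mul_le_mul_of_nonneg_right hWB (by positivity)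
      have u2 : ((B.card:ℝ)) * ((n.choose 2:ℕ):ℝ) ≤ (c'^2 * p^2 * m) * ((n.choose 2:ℕ):ℝ) :=
        mul_le_mul_of_nonneg_right hBcard hC.le
      linarith [t1, t2, u1, u2]
    rw [inv_mul_le_iff₀ hC]
    have hc2 : c'^2 ≤ 1 := by nlinarith [hc'0, hc']
    nlinarith [hsum, hC, hm0, sq_nonneg p, mul_nonneg (mul_nonneg (sq_nonneg p) hC.le) hm0]
end
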